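/- arXiv:1906.05413 — 8 statements merged into one kernel-verified Lean document; each statement's English description precedes it below -/
import Mathlib

section
/- Let f(y,z) = a + by + cz + dyz be a polynomial with nonnegative real coefficients a, b, c, d. Then log f is concave on the positive orthant {(y,z) : y > 0, z > 0} if and only if 2bc ≥ ad. -/
/-!
Along a line, `f(p + t v) = f(p) + B t + C t²` with `B = (b + d z) v₁ + (c + d y) v₂` the
directional derivative and `C = d v₁ v₂`. Hence `log f` is concave on the orthant iff
`f(p) · 2C ≤ B²` for all `p` and `v`: sufficiency is the one-variable criterion `φ φ'' ≤ φ'²`, and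
necessity follows from the midpoint inequality `f(p - t v) f(p + t v) ≤ f(p)²`, since
`f(p - t v) f(p + t v) - f(p)² = t² (2 f(p) C - B² + C² t²)`.

This pointwise condition is trivial when `v₁ v₂ ≤ 0`; otherwise its defect is
`(X v₁ - Y v₂)² + 2 v₁ v₂ ((X Y - b c) + (2 b c - a d))` with `X = b + d z`, `Y = c + d y`, which
is nonnegative when `a d ≤ 2 b c`. Conversely, at `p = (ε, ε)` in the direction `(Y, X)` it reads
`a d - 2 b c ≤ d ε (b + c + d ε)`, and `ε → 0` gives `a d ≤ 2 b c`.
-/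

open Real Set Filter Topology

theorem concaveOn_log_of_mul_deriv2_le_sq {D : Set ℝ} (hD : Convex ℝ D) {φ φ' φ'' : ℝ → ℝ}
    (hφ : ∀ t, HasDerivAt φ (φ' t) t) (hφ' : ∀ t, HasDerivAt φ' (φ'' t) t)
    (hpos : ∀ t ∈ D, 0 < φ t) (h : ∀ t ∈ interior D, φ t * φ'' t ≤ φ' t ^ 2) :
    ConcaveOn ℝ D fun t => log (φ t) := by
  refine concaveOn_of_hasDerivWithinAt2_nonpos hD (f' := fun t => φ' t / φ t)
    (f'' := fun t => (φ'' t * φ t - φ' t * φ' t) / φ t ^ 2) ?_ ?_ ?_ ?_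
  · exact ContinuousOn.log (fun t _ => (hφ t).continuousAt.continuousWithinAt)
      fun t ht => (hpos t ht).ne'
  · intro t ht
    exact ((hφ t).log (hpos t (interior_subset ht)).ne').hasDerivWithinAt
  · intro t ht
    exact ((hφ' t).div (hφ t) (hpos t (interior_subset ht)).ne').hasDerivWithinAt
  · intro t ht
    rw [mul_comm, ← sq]
    exact div_nonpos_of_nonpos_of_nonneg (sub_nonpos.2 (h t ht)) (sq_nonneg _)

theorem concaveOn_of_forall_segment {E : Type*} [AddCommGroup E] [Module ℝ E] {s : Set E}
    (hs : Convex ℝ s) {g : E → ℝ}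
    (h : ∀ x ∈ s, ∀ y ∈ s, ConcaveOn ℝ (Icc 0 1) fun t : ℝ => g (x + t • (y - x))) :
    ConcaveOn ℝ s g := by
  refine ⟨hs, fun x hx y hy p q hp hq hpq => ?_⟩
  have h01 := (h x hx y hy).2 (left_mem_Icc.2 zero_le_one) (right_mem_Icc.2 zero_le_one) hp hq hpq
  simp only [smul_eq_mul, mul_zero, mul_one, zero_add, zero_smul, add_zero, one_smul,
    add_sub_cancel] at h01
  rw [smul_eq_mul, smul_eq_mul]
  convert h01 using 2
  rw [eq_sub_of_add_eq hpq]
  module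

theorem mul_le_sq_of_concaveOn_log {E : Type*} [AddCommGroup E] [Module ℝ E] {s : Set E}
    {g : E → ℝ} (hg : ConcaveOn ℝ s fun x => log (g x)) (hpos : ∀ x ∈ s, 0 < g x) {x v : E}
    (h₁ : x - v ∈ s) (h₂ : x + v ∈ s) : g (x - v) * g (x + v) ≤ g x ^ 2 := by
  have hmid : (1 / 2 : ℝ) • (x - v) + (1 / 2 : ℝ) • (x + v) = x := by module
  have hx : x ∈ s := hmid ▸ hg.1 h₁ h₂ (by norm_num) (by norm_num) (by norm_num)
  have hlog := hg.2 h₁ h₂ (by norm_num : (0 : ℝ) ≤ 1 / 2) (by norm_num : (0 : ℝ) ≤ 1 / 2)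
    (by norm_num)
  simp only [hmid, smul_eq_mul] at hlog
  have := hpos _ h₁
  have := hpos _ h₂
  have := hpos _ hx
  rw [← log_le_log_iff (by positivity) (by positivity), log_mul (by positivity) (by positivity),
    log_pow]
  push_cast
  linarith

theorem exists_pos_sub_smul_mem_and_add_smul_mem {E : Type*} [TopologicalSpace E]
    [AddCommGroup E] [IsTopologicalAddGroup E] [Module ℝ E] [ContinuousSMul ℝ E] {s : Set E}
    {x : E} (hs : s ∈ 𝓝 x) (v : E) : ∃ t : ℝ, 0 < t ∧ x - t • v ∈ s ∧ x + t • v ∈ s := by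
  have hsub : Tendsto (fun t : ℝ => x - t • v) (𝓝 0) (𝓝 x) :=
    (by fun_prop : Continuous fun t : ℝ => x - t • v).tendsto' 0 x (by simp)
  have hadd : Tendsto (fun t : ℝ => x + t • v) (𝓝 0) (𝓝 x) :=
    (by fun_prop : Continuous fun t : ℝ => x + t • v).tendsto' 0 x (by simp)
  have hev : ∀ᶠ t in 𝓝[>] (0 : ℝ), x - t • v ∈ s ∧ x + t • v ∈ s :=
    nhdsWithin_le_nhds ((hsub.eventually hs).and (hadd.eventually hs))
  obtain ⟨t, hmem, ht⟩ := (hev.and self_mem_nhdsWithin).exists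
  exact ⟨t, ht, hmem⟩

noncomputable def bilinAffine (a b c d : ℝ) (p : ℝ × ℝ) : ℝ :=
  a + b * p.1 + c * p.2 + d * p.1 * p.2

noncomputable def bilinAffineDeriv (b c d : ℝ) (p v : ℝ × ℝ) : ℝ :=
  (b + d * p.2) * v.1 + (c + d * p.1) * v.2

section BilinAffine

variable {a b c d : ℝ}

theorem bilinAffine_add_smul (p v : ℝ × ℝ) (t : ℝ) :
    bilinAffine a b c d (p + t • v) =
      bilinAffine a b c d p + bilinAffineDeriv b c d p v * t + d * v.1 * v.2 * t ^ 2 := by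
  simp only [bilinAffine, bilinAffineDeriv, Prod.fst_add, Prod.snd_add, Prod.smul_fst,
    Prod.smul_snd, smul_eq_mul]
  ring

theorem bilinAffineDeriv_add_smul (p v : ℝ × ℝ) (t : ℝ) :
    bilinAffineDeriv b c d (p + t • v) v =
      bilinAffineDeriv b c d p v + 2 * (d * v.1 * v.2) * t := by
  simp only [bilinAffineDeriv, Prod.fst_add, Prod.snd_add, Prod.smul_fst, Prod.smul_snd,
    smul_eq_mul]
  ring

theorem hasDerivAt_bilinAffine_add_smul (p v : ℝ × ℝ) (t : ℝ) :
    HasDerivAt (fun s => bilinAffine a b c d (p + s • v))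
      (bilinAffineDeriv b c d (p + t • v) v) t := by
  simp only [bilinAffine_add_smul, bilinAffineDeriv_add_smul]
  exact ((((hasDerivAt_id t).const_mul (bilinAffineDeriv b c d p v)).const_add
    (bilinAffine a b c d p)).add ((hasDerivAt_pow 2 t).const_mul (d * v.1 * v.2))).congr_deriv
    (by push_cast; ring)

theorem hasDerivAt_bilinAffineDeriv_add_smul (p v : ℝ × ℝ) (t : ℝ) :
    HasDerivAt (fun s => bilinAffineDeriv b c d (p + s • v) v) (2 * (d * v.1 * v.2)) t := by
  simp only [bilinAffineDeriv_add_smul]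
  simpa using ((hasDerivAt_id t).const_mul (2 * (d * v.1 * v.2))).const_add
    (bilinAffineDeriv b c d p v)

theorem le_bilinAffine (hb : 0 ≤ b) (hc : 0 ≤ c) (hd : 0 ≤ d) {p : ℝ × ℝ} (hy : 0 ≤ p.1)
    (hz : 0 ≤ p.2) : a ≤ bilinAffine a b c d p := by
  have := mul_nonneg hb hy
  have := mul_nonneg hc hz
  have := mul_nonneg (mul_nonneg hd hy) hz
  simp only [bilinAffine]
  linarith

theorem bilinAffine_mul_le_bilinAffineDeriv_sq (ha : 0 ≤ a) (hb : 0 ≤ b) (hc : 0 ≤ c)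
    (hd : 0 ≤ d) (had : a * d ≤ 2 * (b * c)) {p : ℝ × ℝ} (hy : 0 ≤ p.1) (hz : 0 ≤ p.2)
    (v : ℝ × ℝ) :
    bilinAffine a b c d p * (2 * (d * v.1 * v.2)) ≤ bilinAffineDeriv b c d p v ^ 2 := by
  have hf : 0 ≤ bilinAffine a b c d p := ha.trans (le_bilinAffine hb hc hd hy hz)
  rcases le_total (v.1 * v.2) 0 with huv | huv
  · calc bilinAffine a b c d p * (2 * (d * v.1 * v.2)) ≤ 0 :=
          mul_nonpos_of_nonneg_of_nonpos hf (by nlinarith)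
      _ ≤ _ := sq_nonneg _
  · have hXY : 0 ≤ (b + d * p.2) * (c + d * p.1) - b * c := by
      have := mul_nonneg (mul_nonneg hb hd) hy
      have := mul_nonneg (mul_nonneg hc hd) hz
      have := mul_nonneg (mul_nonneg (mul_nonneg hd hd) hy) hz
      nlinarith
    have hsq : bilinAffineDeriv b c d p v ^ 2 - bilinAffine a b c d p * (2 * (d * v.1 * v.2)) =
        ((b + d * p.2) * v.1 - (c + d * p.1) * v.2) ^ 2 +
          2 * (v.1 * v.2) * (((b + d * p.2) * (c + d * p.1) - b * c) + (2 * (b * c) - a * d)) := by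
      simp only [bilinAffine, bilinAffineDeriv]
      ring
    nlinarith [sq_nonneg ((b + d * p.2) * v.1 - (c + d * p.1) * v.2),
      mul_nonneg huv (add_nonneg hXY (sub_nonneg.2 had))]

theorem le_of_forall_bilinAffine_mul_le (hb : 0 ≤ b) (hc : 0 ≤ c) (hd : 0 ≤ d)
    (h : ∀ p ∈ Ioi 0 ×ˢ Ioi 0, ∀ v : ℝ × ℝ,
      bilinAffine a b c d p * (2 * (d * v.1 * v.2)) ≤ bilinAffineDeriv b c d p v ^ 2) :
    a * d ≤ 2 * (b * c) := by
  rcases hd.eq_or_lt with rfl | hd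
  · simpa using mul_nonneg hb hc
  have hgap : ∀ ε > 0, a * d - 2 * (b * c) ≤ d * ε * (b + c + d * ε) := by
    intro ε hε
    have hε' := h (ε, ε) ⟨hε, hε⟩ (c + d * ε, b + d * ε)
    simp only [bilinAffine, bilinAffineDeriv] at hε'
    refine le_of_mul_le_mul_left ?_ (by positivity : 0 < 2 * (b + d * ε) * (c + d * ε))
    linear_combination hε'
  have hlim : Tendsto (fun ε => d * ε * (b + c + d * ε)) (𝓝[>] 0) (𝓝 0) :=
    ((by fun_prop : Continuous fun ε => d * ε * (b + c + d * ε)).tendsto' 0 0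
      (by simp)).mono_left nhdsWithin_le_nhds
  exact sub_nonpos.1 (ge_of_tendsto hlim (eventually_nhdsWithin_of_forall hgap))

theorem forall_bilinAffine_mul_le_iff (ha : 0 ≤ a) (hb : 0 ≤ b) (hc : 0 ≤ c) (hd : 0 ≤ d) :
    (∀ p ∈ Ioi 0 ×ˢ Ioi 0, ∀ v : ℝ × ℝ,
      bilinAffine a b c d p * (2 * (d * v.1 * v.2)) ≤ bilinAffineDeriv b c d p v ^ 2) ↔
      a * d ≤ 2 * (b * c) :=
  ⟨le_of_forall_bilinAffine_mul_le hb hc hd, fun had _ hp =>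
    bilinAffine_mul_le_bilinAffineDeriv_sq ha hb hc hd had hp.1.le hp.2.le⟩

theorem concaveOn_log_bilinAffine_iff (ha : 0 < a) (hb : 0 ≤ b) (hc : 0 ≤ c) (hd : 0 ≤ d) :
    ConcaveOn ℝ (Ioi 0 ×ˢ Ioi 0) (fun p => log (bilinAffine a b c d p)) ↔
      ∀ p ∈ Ioi 0 ×ˢ Ioi 0, ∀ v : ℝ × ℝ,
        bilinAffine a b c d p * (2 * (d * v.1 * v.2)) ≤ bilinAffineDeriv b c d p v ^ 2 := by
  have hpos : ∀ p ∈ Ioi (0 : ℝ) ×ˢ Ioi (0 : ℝ), 0 < bilinAffine a b c d p :=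
    fun p hp => ha.trans_le (le_bilinAffine hb hc hd hp.1.le hp.2.le)
  constructor
  · intro hconc p hp v
    obtain ⟨t, ht, hsub, hadd⟩ :=
      exists_pos_sub_smul_mem_and_add_smul_mem ((isOpen_Ioi.prod isOpen_Ioi).mem_nhds hp) v
    have hmul := mul_le_sq_of_concaveOn_log hconc hpos hsub hadd
    rw [sub_eq_add_neg, ← neg_smul, bilinAffine_add_smul, bilinAffine_add_smul] at hmul
    set A := bilinAffine a b c d p
    set B := bilinAffineDeriv b c d p v
    set C := d * v.1 * v.2
    have hgap : (A * (2 * C) - B ^ 2 + C ^ 2 * t ^ 2) * t ^ 2 ≤ 0 := by linear_combination hmul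
    nlinarith [nonpos_of_mul_nonpos_left hgap (by positivity), sq_nonneg (C * t)]
  · intro h
    have hs : Convex ℝ (Ioi (0 : ℝ) ×ˢ Ioi (0 : ℝ)) := (convex_Ioi 0).prod (convex_Ioi 0)
    refine concaveOn_of_forall_segment hs fun p hp q hq => ?_
    have hmem : ∀ t ∈ Icc (0 : ℝ) 1, p + t • (q - p) ∈ Ioi (0 : ℝ) ×ˢ Ioi (0 : ℝ) :=
      fun t ht => hs.add_smul_sub_mem hp hq ht
    refine concaveOn_log_of_mul_deriv2_le_sq (convex_Icc 0 1)
      (hasDerivAt_bilinAffine_add_smul p (q - p)) (hasDerivAt_bilinAffineDeriv_add_smul p (q - p))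
      (fun t ht => hpos _ (hmem t ht)) fun t ht => ?_
    rw [interior_Icc] at ht
    exact h _ (hmem t (Ioo_subset_Icc_self ht)) (q - p)

end BilinAffine

/-- `log f` for `f(y,z) = a + b*y + c*z + d*y*z` with nonnegative
coefficients (and `a > 0` ensuring positivity on the positive orthant) is concave
on the positive orthant iff `2*b*c ≥ a*d`. -/
theorem bilinear_log_concave_iff (a b c d : ℝ) (ha : 0 < a) (hb : 0 ≤ b) (hc : 0 ≤ c)
    (hd : 0 ≤ d) :
    ConcaveOn ℝ {p : ℝ × ℝ | 0 < p.1 ∧ 0 < p.2}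
      (fun p : ℝ × ℝ => Real.log (a + b * p.1 + c * p.2 + d * p.1 * p.2)) ↔
    a * d ≤ 2 * (b * c) :=
  (concaveOn_log_bilinAffine_iff ha hb hc hd).trans (forall_bilinAffine_mul_le_iff ha.le hb hc hd)
end

section
/- Let A be a real symmetric n×n matrix with strictly positive entries and at most one positive eigenvalue, and let v be a Perron–Frobenius eigenvector of A (entrywise positive eigenvector for the largest eigenvalue). Then the matrix B with entries B_{ij} = A_{ij}/(v_i v_j) is conditionally negative definite: zᵀBz ≤ 0 for all z with ∑ᵢ zᵢ = 0. -/
open Finset Matrix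

/-! With `w = z / v` the form becomes `w ⬝ᵥ (A *ᵥ w)`, and `∑ z = v ⬝ᵥ w = 0`. In an orthonormal
eigenbasis, `v` is orthogonal to every eigenvector whose eigenvalue differs from `μ > 0`; as `μ` is
the only positive eigenvalue, `v` is a nonzero multiple of a single basis vector `e`, so `w ⊥ e`
and `w ⬝ᵥ (A *ᵥ w) = ∑ λₖ (eₖ ⬝ᵥ w)²` has only nonpositive terms. -/

namespace Matrix.IsHermitian

variable {ι : Type*} [Fintype ι] [DecidableEq ι] {A : Matrix ι ι ℝ} (hA : A.IsHermitian)

theorem dotProduct_eq_sum_eigenvectorBasis (x y : ι → ℝ) :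
    x ⬝ᵥ y = ∑ k, (⇑(hA.eigenvectorBasis k) ⬝ᵥ x) * (⇑(hA.eigenvectorBasis k) ⬝ᵥ y) := by
  have := hA.eigenvectorBasis.sum_inner_mul_inner (WithLp.toLp 2 x) (WithLp.toLp 2 y)
  simp only [EuclideanSpace.inner_eq_star_dotProduct, star_trivial] at this
  rw [dotProduct_comm, ← this]
  simp only [dotProduct_comm y]

theorem eigenvectorBasis_dotProduct_mulVec (k : ι) (x : ι → ℝ) :
    ⇑(hA.eigenvectorBasis k) ⬝ᵥ (A *ᵥ x) = hA.eigenvalues k * (⇑(hA.eigenvectorBasis k) ⬝ᵥ x) := by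
  rw [dotProduct_mulVec, ← mulVec_transpose, ← conjTranspose_eq_transpose_of_trivial, hA.eq,
    mulVec_eigenvectorBasis, smul_dotProduct, smul_eq_mul]

theorem dotProduct_mulVec_self_eq_sum (x : ι → ℝ) :
    x ⬝ᵥ (A *ᵥ x) = ∑ k, hA.eigenvalues k * (⇑(hA.eigenvectorBasis k) ⬝ᵥ x) ^ 2 := by
  rw [hA.dotProduct_eq_sum_eigenvectorBasis]
  refine sum_congr rfl fun k _ => ?_
  rw [eigenvectorBasis_dotProduct_mulVec]
  ring

theorem eigenvectorBasis_dotProduct_eq_zero {v : ι → ℝ} {μ : ℝ} (hv : A *ᵥ v = μ • v) {k : ι}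
    (hk : hA.eigenvalues k ≠ μ) : ⇑(hA.eigenvectorBasis k) ⬝ᵥ v = 0 := by
  have h := hA.eigenvectorBasis_dotProduct_mulVec k v
  rw [hv, dotProduct_smul, smul_eq_mul] at h
  have : (hA.eigenvalues k - μ) * (⇑(hA.eigenvectorBasis k) ⬝ᵥ v) = 0 := by
    linear_combination h.symm
  exact (mul_eq_zero.1 this).resolve_left (sub_ne_zero.2 hk)

theorem dotProduct_mulVec_self_nonpos_of_dotProduct_eq_zero
    (hcount : (univ.filter fun k => 0 < hA.eigenvalues k).card ≤ 1)
    {v : ι → ℝ} {μ : ℝ} (hv : A *ᵥ v = μ • v) (hv0 : v ≠ 0) (hμ : 0 < μ)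
    {w : ι → ℝ} (hw : v ⬝ᵥ w = 0) : w ⬝ᵥ (A *ᵥ w) ≤ 0 := by
  obtain ⟨k₀, hk₀⟩ : ∃ k₀, ⇑(hA.eigenvectorBasis k₀) ⬝ᵥ v ≠ 0 := by
    by_contra! h
    have hvv := hA.dotProduct_eq_sum_eigenvectorBasis v v
    simp only [h, mul_zero, sum_const_zero] at hvv
    exact hv0 (dotProduct_self_eq_zero.1 hvv)
  have hμk₀ : hA.eigenvalues k₀ = μ := by
    by_contra h
    exact hk₀ (hA.eigenvectorBasis_dotProduct_eq_zero hv h)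
  have hnonpos : ∀ k ≠ k₀, hA.eigenvalues k ≤ 0 := by
    intro k hk
    by_contra! h
    exact hk (card_le_one.1 hcount k (by simp [h]) k₀ (by simp [hμk₀, hμ]))
  have hwk₀ : ⇑(hA.eigenvectorBasis k₀) ⬝ᵥ w = 0 := by
    have h := hA.dotProduct_eq_sum_eigenvectorBasis v w
    rw [hw, sum_eq_single k₀ (fun k _ hk => by
      rw [hA.eigenvectorBasis_dotProduct_eq_zero hv (by linarith [hnonpos k hk]), zero_mul])
      (by simp)] at h
    exact (mul_eq_zero.1 h.symm).resolve_left hk₀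
  rw [hA.dotProduct_mulVec_self_eq_sum]
  refine sum_nonpos fun k _ => ?_
  rcases eq_or_ne k k₀ with rfl | hk
  · simp [hwk₀]
  · exact mul_nonpos_of_nonpos_of_nonneg (hnonpos k hk) (sq_nonneg _)

end Matrix.IsHermitian

theorem Matrix.pos_of_mulVec_eq_smul_of_pos {ι : Type*} [Fintype ι] [Nonempty ι]
    {A : Matrix ι ι ℝ} (hA : ∀ i j, 0 < A i j) {v : ι → ℝ} (hv : ∀ i, 0 < v i) {μ : ℝ}
    (h : A *ᵥ v = μ • v) : 0 < μ := by
  obtain ⟨i⟩ := ‹Nonempty ι›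
  have hAv : 0 < (A *ᵥ v) i := sum_pos (fun j _ => mul_pos (hA i j) (hv j)) univ_nonempty
  rw [h, Pi.smul_apply, smul_eq_mul] at hAv
  exact (pos_iff_pos_of_mul_pos hAv).2 (hv i)

theorem Matrix.sum_sum_mul_div_mul_mul_eq_dotProduct_mulVec {ι : Type*} [Fintype ι]
    (A : Matrix ι ι ℝ) {v : ι → ℝ} (hv : ∀ i, v i ≠ 0) (z : ι → ℝ) :
    ∑ i, ∑ j, z i * (A i j / (v i * v j)) * z j = (z / v) ⬝ᵥ (A *ᵥ (z / v)) := by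
  simp only [dotProduct, mulVec, mul_sum, Pi.div_apply]
  refine sum_congr rfl fun i _ => sum_congr rfl fun j _ => ?_
  field_simp [hv i, hv j]

theorem perron_scaled_cond_neg_def_general (n : ℕ) (A : Matrix (Fin n) (Fin n) ℝ)
    (hA : A.IsHermitian) (hpos : ∀ i j, 0 < A i j)
    (hcount : (Finset.univ.filter fun i => 0 < hA.eigenvalues i).card ≤ 1)
    (v : Fin n → ℝ) (hv : ∀ i, 0 < v i) (μ : ℝ)
    (heig : A.mulVec v = μ • v) :
    ∀ z : Fin n → ℝ, (∑ i, z i) = 0 →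
      ∑ i, ∑ j, z i * (A i j / (v i * v j)) * z j ≤ 0 := by
  intro z hz
  rcases isEmpty_or_nonempty (Fin n) with _ | _
  · simp
  have hv0 : ∀ i, v i ≠ 0 := fun i => (hv i).ne'
  rw [A.sum_sum_mul_div_mul_mul_eq_dotProduct_mulVec hv0]
  refine hA.dotProduct_mulVec_self_nonpos_of_dotProduct_eq_zero hcount heig
    (fun h => hv0 (Classical.arbitrary _) (congrFun h _))
    (Matrix.pos_of_mulVec_eq_smul_of_pos hpos hv heig) ?_
  simpa only [dotProduct, Pi.div_apply, mul_div_cancel₀ _ (hv0 _)] using hz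

/-- if `A` is real symmetric with positive entries and at most one
positive eigenvalue, and `v` is an entrywise positive eigenvector for the largest
eigenvalue `μ`, then `B i j = A i j / (v i * v j)` is conditionally negative
definite. -/
theorem perron_scaled_cond_neg_def (n : ℕ) (A : Matrix (Fin n) (Fin n) ℝ)
    (hA : A.IsHermitian) (hpos : ∀ i j, 0 < A i j)
    (hcount : (Finset.univ.filter fun i => 0 < hA.eigenvalues i).card ≤ 1)
    (v : Fin n → ℝ) (hv : ∀ i, 0 < v i) (μ : ℝ)
    (hμmax : ∀ i, hA.eigenvalues i ≤ μ)
    (hμmem : ∃ i, hA.eigenvalues i = μ)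
    (heig : A.mulVec v = μ • v) :
    ∀ z : Fin n → ℝ, (∑ i, z i) = 0 →
      ∑ i, ∑ j, z i * (A i j / (v i * v j)) * z j ≤ 0 :=
  perron_scaled_cond_neg_def_general n A hA hpos hcount v hv μ heig
end

section
/- If A is a real symmetric n×n matrix that is conditionally negative definite with nonnegative entries, then for every α with 0 ≤ α ≤ 1 the entrywise power A^{∘α} (with entries A_{ij}^α) is conditionally negative definite. -/
/-!
Schoenberg's theorem: if `A` is symmetric and conditionally negative semidefinite, then
`exp (-t A)` (entrywise) is positive semidefinite for every `t ≥ 0`. Indeed, for a fixed index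
`k` the matrix `A i k + A k j - A i j - A k k` is positive semidefinite, so is its entrywise
exponential by the Schur product theorem, and `exp (-t A)` is a positive diagonal congruence of
the latter. For `0 < α < 1` and `x ≥ 0` one has the Bernstein representation
`c * x ^ α = ∫₀^∞ (1 - exp (-t x)) t ^ (-1 - α) dt` with `c > 0`; on vectors summing to zero the
constant term `1` drops out of the quadratic form, leaving minus the integral of positive
semidefinite forms.
-/

open Finset MeasureTheory Set

open scoped ComplexOrder

namespace Real

variable {α : ℝ}

theorem one_sub_exp_neg_pos {s : ℝ} (hs : 0 < s) : 0 < 1 - exp (-s) :=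
  sub_pos.2 (exp_lt_one_iff.2 (neg_lt_zero.2 hs))

theorem integrableOn_one_sub_exp_neg_mul_rpow (h0 : 0 < α) (h1 : α < 1) :
    IntegrableOn (fun s => (1 - exp (-s)) * s ^ (-1 - α)) (Ioi 0) := by
  have hmeas : AEStronglyMeasurable (fun s => (1 - exp (-s)) * s ^ (-1 - α)) :=
    (by fun_prop : Measurable fun s : ℝ => (1 - exp (-s)) * s ^ (-1 - α)).aestronglyMeasurable
  have hbound : ∀ {s c : ℝ}, 0 < s → 1 - exp (-s) ≤ c →
      ‖(1 - exp (-s)) * s ^ (-1 - α)‖ ≤ c * s ^ (-1 - α) := fun hs hc => by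
    rw [norm_of_nonneg (mul_nonneg (one_sub_exp_neg_pos hs).le (rpow_nonneg hs.le _))]
    exact mul_le_mul_of_nonneg_right hc (rpow_nonneg hs.le _)
  rw [← Ioc_union_Ioi_eq_Ioi zero_le_one]
  refine .union (Integrable.mono' (g := fun s => s ^ (-α)) ?_ hmeas.restrict ?_)
    (Integrable.mono' (integrableOn_Ioi_rpow_of_lt (a := -1 - α) (by linarith) one_pos)
      hmeas.restrict ?_)
  · exact (intervalIntegral.intervalIntegrable_rpow' (by linarith)).1
  · filter_upwards [ae_restrict_mem measurableSet_Ioc] with s hs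
    convert hbound hs.1 (c := s) (by linarith [add_one_le_exp (-s)]) using 1
    rw [← rpow_one_add' hs.1.le (by linarith)]
    ring_nf
  · filter_upwards [ae_restrict_mem measurableSet_Ioi] with s hs
    simpa using hbound (zero_lt_one.trans hs) (c := 1) (by linarith [exp_pos (-s)])

theorem integral_one_sub_exp_neg_mul_rpow_pos (h0 : 0 < α) (h1 : α < 1) :
    0 < ∫ s in Ioi 0, (1 - exp (-s)) * s ^ (-1 - α) := by
  have hpos : ∀ s ∈ Ioi (0 : ℝ), 0 < (1 - exp (-s)) * s ^ (-1 - α) :=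
    fun s hs => mul_pos (one_sub_exp_neg_pos hs) (rpow_pos_of_pos hs _)
  refine (setIntegral_pos_iff_support_of_nonneg_ae ?_
    (integrableOn_one_sub_exp_neg_mul_rpow h0 h1)).2 ?_
  · filter_upwards [ae_restrict_mem measurableSet_Ioi] with s hs using (hpos s hs).le
  · have hsupp : Ioi (0 : ℝ) ⊆ Function.support (fun s => (1 - exp (-s)) * s ^ (-1 - α)) ∩ Ioi 0 :=
      fun s hs => ⟨(hpos s hs).ne', hs⟩
    exact (by simp : (0 : ENNReal) < volume (Ioi (0 : ℝ))).trans_le (measure_mono hsupp)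

theorem one_sub_exp_neg_mul_mul_rpow_eq {x t : ℝ} (hx : 0 < x) (ht : 0 < t) :
    (1 - exp (-(t * x))) * t ^ (-1 - α)
      = x ^ (1 + α) * ((1 - exp (-(x * t))) * (x * t) ^ (-1 - α)) := by
  rw [mul_rpow hx.le ht.le, mul_comm t x, mul_left_comm, ← mul_assoc (x ^ (1 + α)),
    ← rpow_add hx]
  simp

theorem integral_one_sub_exp_neg_mul_mul_rpow (hα : α ≠ 0) {x : ℝ} (hx : 0 ≤ x) :
    ∫ t in Ioi 0, (1 - exp (-(t * x))) * t ^ (-1 - α)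
      = (∫ s in Ioi 0, (1 - exp (-s)) * s ^ (-1 - α)) * x ^ α := by
  rcases hx.eq_or_lt with rfl | hx
  · simp [zero_rpow hα]
  rw [setIntegral_congr_fun measurableSet_Ioi fun t ht => one_sub_exp_neg_mul_mul_rpow_eq hx ht,
    integral_const_mul,
    integral_comp_mul_left_Ioi (fun s => (1 - exp (-s)) * s ^ (-1 - α)) 0 hx, mul_zero,
    smul_eq_mul, ← mul_assoc, mul_comm, ← rpow_neg_one, ← rpow_add hx]
  ring_nf

theorem integrableOn_one_sub_exp_neg_mul_mul_rpow (h0 : 0 < α) (h1 : α < 1) {x : ℝ}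
    (hx : 0 ≤ x) : IntegrableOn (fun t => (1 - exp (-(t * x))) * t ^ (-1 - α)) (Ioi 0) := by
  rcases hx.eq_or_lt with rfl | hx
  · simp
  refine IntegrableOn.congr_fun ?_ (fun t ht => (one_sub_exp_neg_mul_mul_rpow_eq hx ht).symm)
    measurableSet_Ioi
  refine Integrable.const_mul ?_ _
  change IntegrableOn (fun t => (1 - exp (-(x * t))) * (x * t) ^ (-1 - α)) (Ioi 0)
  rw [integrableOn_Ioi_comp_mul_left_iff (fun s => (1 - exp (-s)) * s ^ (-1 - α)) 0 hx,
    mul_zero]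
  exact integrableOn_one_sub_exp_neg_mul_rpow h0 h1

end Real

namespace Matrix

variable {ι : Type*} [Fintype ι]

theorem dotProduct_mulVec_eq_sum_sum {R : Type*} [CommSemiring R] (M : Matrix ι ι R)
    (v w : ι → R) : v ⬝ᵥ M *ᵥ w = ∑ i, ∑ j, v i * M i j * w j := by
  simp only [dotProduct, mulVec, Finset.mul_sum, mul_assoc]

theorem PosSemidef.map_pow {𝕜 : Type*} [RCLike 𝕜] {B : Matrix ι ι 𝕜} (hB : B.PosSemidef) :
    ∀ m : ℕ, (B.map (· ^ m)).PosSemidef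
  | 0 => by
    simpa [vecMulVec, Matrix.map] using posSemidef_vecMulVec_self_star (1 : ι → 𝕜)
  | m + 1 => by
    convert (hB.map_pow m).hadamard hB using 1
    ext i j
    simp [pow_succ]

theorem PosSemidef.map_exp {B : Matrix ι ι ℝ} (hB : B.PosSemidef) :
    (B.map Real.exp).PosSemidef := by
  refine .of_dotProduct_mulVec_nonneg ?_ fun x => ?_
  · simpa [IsHermitian, conjTranspose_map] using hB.isHermitian.map Real.exp (fun _ => rfl)
  have hsum : HasSum (fun m : ℕ => (m.factorial : ℝ)⁻¹ • B.map (· ^ m)) (B.map Real.exp) :=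
    Pi.hasSum.2 fun i => Pi.hasSum.2 fun j => by
      simpa [Real.exp_eq_exp_ℝ, div_eq_inv_mul] using
        NormedSpace.expSeries_div_hasSum_exp (B i j)
  let q : Matrix ι ι ℝ →ₗ[ℝ] ℝ :=
    { toFun := fun M => star x ⬝ᵥ M *ᵥ x
      map_add' := by simp [add_mulVec]
      map_smul' := by simp [smul_mulVec] }
  refine (hsum.map q (LinearMap.continuous_of_finiteDimensional q)).nonneg fun m => ?_
  simpa [q, smul_mulVec] using
    mul_nonneg (by positivity) ((hB.map_pow m).dotProduct_mulVec_nonneg x)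

def CondNegSemidef (A : Matrix ι ι ℝ) : Prop :=
  ∀ z : ι → ℝ, ∑ i, z i = 0 → z ⬝ᵥ A *ᵥ z ≤ 0

theorem CondNegSemidef.posSemidef_neg_mul_mul_transpose {A : Matrix ι ι ℝ} (hA : A.IsSymm)
    (h : A.CondNegSemidef) {P : Matrix ι ι ℝ} (hP : P *ᵥ 1 = 0) :
    (-(P * A * Pᵀ)).PosSemidef := by
  refine .of_dotProduct_mulVec_nonneg ?_ fun x => ?_
  · simp [IsHermitian, transpose_mul, hA.eq, Matrix.mul_assoc]
  have hsum : ∑ i, (Pᵀ *ᵥ x) i = 0 := by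
    rw [← one_dotProduct, dotProduct_mulVec, vecMul_transpose, hP, zero_dotProduct]
  rw [star_trivial, neg_mulVec, dotProduct_neg, ← mulVec_mulVec, ← mulVec_mulVec,
    dotProduct_mulVec, ← mulVec_transpose, le_neg, neg_zero]
  exact h _ hsum

theorem CondNegSemidef.posSemidef_map_exp_neg_mul {A : Matrix ι ι ℝ} (hA : A.IsSymm)
    (h : A.CondNegSemidef) {t : ℝ} (ht : 0 ≤ t) :
    (A.map fun a => Real.exp (-(t * a))).PosSemidef := by
  classical
  cases isEmpty_or_nonempty ι
  · exact Subsingleton.elim (0 : Matrix ι ι ℝ) (A.map _) ▸ .zero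
  obtain ⟨k⟩ := ‹Nonempty ι›
  set P : Matrix ι ι ℝ := 1 - replicateRow ι (Pi.single k 1)
  have hP : P *ᵥ 1 = 0 := by
    ext i
    simp [P, mulVec, dotProduct, one_apply]
  have hPAP : ∀ i j, (-(P * A * Pᵀ)) i j = A i k + A k j - A i j - A k k := by
    intro i j
    simp only [P, sub_mul, one_mul, transpose_sub, transpose_one, transpose_replicateRow, mul_sub,
      mul_one, neg_apply, sub_apply, mul_apply, replicateRow_apply, Pi.single_apply, ite_mul,
      zero_mul, sum_ite_eq', Finset.mem_univ, ↓reduceIte, replicateCol_apply, mul_ite, mul_zero,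
      neg_sub]
    ring
  set D : Matrix ι ι ℝ := diagonal fun i => Real.exp (-(t * A i k))
  have hfactor : A.map (fun a => Real.exp (-(t * a)))
      = Real.exp (t * A k k) • (D * (t • -(P * A * Pᵀ)).map Real.exp * Dᴴ) := by
    ext i j
    simp only [D, map_apply, smul_apply, smul_eq_mul, diagonal_conjTranspose, diagonal_mul,
      mul_diagonal, hPAP, star_trivial, ← Real.exp_add]
    rw [hA.apply k j]
    ring_nf
  rw [hfactor]
  exact (((h.posSemidef_neg_mul_mul_transpose hA hP).smul ht).map_exp.mul_mul_conjTranspose_same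
    D).smul (Real.exp_pos _).le

open Real in
theorem CondNegSemidef.map_rpow_of_pos_of_lt_one {A : Matrix ι ι ℝ} (hA : A.IsSymm)
    (hpos : ∀ i j, 0 ≤ A i j) (h : A.CondNegSemidef) {α : ℝ} (h0 : 0 < α) (h1 : α < 1) :
    (A.map (· ^ α)).CondNegSemidef := by
  intro z hz
  have hint : ∀ i j, Integrable (fun t => z i * ((1 - exp (-(t * A i j))) * t ^ (-1 - α)) * z j)
      (volume.restrict (Ioi 0)) := fun i j =>
    ((integrableOn_one_sub_exp_neg_mul_mul_rpow h0 h1 (hpos i j)).const_mul (z i)).mul_const (z j)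
  have hform : ∀ t, ∑ i, ∑ j, z i * ((1 - exp (-(t * A i j))) * t ^ (-1 - α)) * z j
      = -(z ⬝ᵥ (A.map fun a => exp (-(t * a))) *ᵥ z) * t ^ (-1 - α) := by
    intro t
    have hzz : ∑ i, ∑ j, z i * z j * t ^ (-1 - α) = 0 := by
      simp [← Finset.sum_mul, ← Finset.mul_sum, hz]
    rw [dotProduct_mulVec_eq_sum_sum, ← sub_zero (∑ i, ∑ j, _), ← hzz]
    simp only [map_apply, Finset.sum_mul, ← Finset.sum_neg_distrib, ← Finset.sum_sub_distrib]
    exact Finset.sum_congr rfl fun i _ => Finset.sum_congr rfl fun j _ => by ring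
  refine nonpos_of_mul_nonpos_right ?_ (integral_one_sub_exp_neg_mul_rpow_pos h0 h1)
  calc (∫ s in Ioi 0, (1 - exp (-s)) * s ^ (-1 - α)) * (z ⬝ᵥ A.map (· ^ α) *ᵥ z)
      = ∫ t in Ioi 0, ∑ i, ∑ j, z i * ((1 - exp (-(t * A i j))) * t ^ (-1 - α)) * z j := by
        rw [integral_finsetSum _ fun i _ => integrable_finsetSum _ fun j _ => hint i j]
        simp only [integral_finsetSum _ fun j _ => hint _ j, integral_mul_const,
          integral_const_mul, integral_one_sub_exp_neg_mul_mul_rpow h0.ne' (hpos _ _),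
          dotProduct_mulVec_eq_sum_sum, Finset.mul_sum, map_apply]
        exact Finset.sum_congr rfl fun i _ => Finset.sum_congr rfl fun j _ => by ring
    _ = ∫ t in Ioi 0, -(z ⬝ᵥ (A.map fun a => exp (-(t * a))) *ᵥ z) * t ^ (-1 - α) := by
        simp only [hform]
    _ ≤ 0 := setIntegral_nonpos measurableSet_Ioi fun t (ht : 0 < t) =>
        mul_nonpos_of_nonpos_of_nonneg
          (neg_nonpos.2 ((h.posSemidef_map_exp_neg_mul hA ht.le).dotProduct_mulVec_nonneg z))
          (rpow_nonneg ht.le _)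

theorem CondNegSemidef.map_rpow {A : Matrix ι ι ℝ} (hA : A.IsSymm) (hpos : ∀ i j, 0 ≤ A i j)
    (h : A.CondNegSemidef) {α : ℝ} (h0 : 0 ≤ α) (h1 : α ≤ 1) :
    (A.map (· ^ α)).CondNegSemidef := by
  rcases h0.eq_or_lt with rfl | h0
  · intro z hz
    simp [dotProduct_mulVec_eq_sum_sum, ← Finset.mul_sum, hz]
  rcases h1.eq_or_lt with rfl | h1
  · simpa using h
  exact h.map_rpow_of_pos_of_lt_one hA hpos h0 h1

end Matrix

/-- conditional negative definiteness of a symmetric matrix with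
nonnegative entries is preserved under entrywise powers with exponent in `[0,1]`. -/
theorem cond_neg_def_entrywise_pow (n : ℕ) (A : Matrix (Fin n) (Fin n) ℝ)
    (hA : A.IsSymm) (hpos : ∀ i j, 0 ≤ A i j)
    (hcnd : ∀ z : Fin n → ℝ, (∑ i, z i) = 0 → ∑ i, ∑ j, z i * A i j * z j ≤ 0)
    (α : ℝ) (hα0 : 0 ≤ α) (hα1 : α ≤ 1) :
    ∀ z : Fin n → ℝ, (∑ i, z i) = 0 →
      ∑ i, ∑ j, z i * (A i j) ^ α * z j ≤ 0 := by
  have hcnd' : A.CondNegSemidef := fun z hz => by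
    simpa only [Matrix.dotProduct_mulVec_eq_sum_sum] using hcnd z hz
  intro z hz
  simpa only [Matrix.dotProduct_mulVec_eq_sum_sum, Matrix.map_apply] using
    hcnd'.map_rpow hA hpos hα0 hα1 z hz
end

section
/- Let A be a real symmetric n×n matrix with at most one positive eigenvalue, and let R be any real m×n matrix. Then the symmetric matrix R A Rᵀ has at most one positive eigenvalue. -/
open Finset Matrix

/-!
A symmetric `A` has at most one positive eigenvalue iff its quadratic form is nonpositive on some
hyperplane `{x | w ⬝ᵥ x = 0}`: the eigenvector of the positive eigenvalue, if there is one, is a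
normal `w`; conversely, two positive eigenvalues make the form positive definite on a plane, and a
plane meets every hyperplane nontrivially. The hyperplane condition passes from `A` to `R A Rᵀ`
with normal `R w`, because `xᵀ (R A Rᵀ) x = (Rᵀ x)ᵀ A (Rᵀ x)`.
-/

namespace Matrix

def IsNonposOnHyperplane {n : Type*} [Fintype n] (A : Matrix n n ℝ) : Prop :=
  ∃ w : n → ℝ, ∀ x, w ⬝ᵥ x = 0 → x ⬝ᵥ A *ᵥ x ≤ 0

lemma IsNonposOnHyperplane.mul_mul_transpose {m n : Type*} [Fintype m] [Fintype n]
    {A : Matrix n n ℝ} (hA : A.IsNonposOnHyperplane) (R : Matrix m n ℝ) :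
    (R * A * Rᵀ).IsNonposOnHyperplane := by
  obtain ⟨w, hw⟩ := hA
  refine ⟨R *ᵥ w, fun x hx => ?_⟩
  rw [← mulVec_mulVec, ← mulVec_mulVec, dotProduct_mulVec, ← mulVec_transpose]
  exact hw _ (by rwa [dotProduct_mulVec, vecMul_transpose])

namespace IsHermitian

variable {n : Type*} [Fintype n] [DecidableEq n] {A : Matrix n n ℝ} (hA : A.IsHermitian)

lemma eigenvectorBasis_dotProduct_eigenvectorBasis (i j : n) :
    ⇑(hA.eigenvectorBasis i) ⬝ᵥ ⇑(hA.eigenvectorBasis j) = if i = j then 1 else 0 := by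
  rw [← orthonormal_iff_ite.mp hA.eigenvectorBasis.orthonormal i j,
    EuclideanSpace.inner_eq_star_dotProduct, star_trivial, dotProduct_comm]

lemma star_eigenvectorUnitary_mulVec_apply (x : n → ℝ) (i : n) :
    (star (hA.eigenvectorUnitary : Matrix n n ℝ) *ᵥ x) i = ⇑(hA.eigenvectorBasis i) ⬝ᵥ x := by
  simp [mulVec, dotProduct]

lemma dotProduct_mulVec_eq_sum (x : n → ℝ) :
    x ⬝ᵥ A *ᵥ x = ∑ i, hA.eigenvalues i * (⇑(hA.eigenvectorBasis i) ⬝ᵥ x) ^ 2 := by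
  set U : Matrix n n ℝ := ↑hA.eigenvectorUnitary
  have hxU : x ᵥ* U = star U *ᵥ x := by
    rw [star_eq_conjTranspose, conjTranspose_eq_transpose_of_trivial, mulVec_transpose]
  conv_lhs => rw [hA.spectral_theorem, Unitary.conjStarAlgAut_apply]
  rw [← mulVec_mulVec, ← mulVec_mulVec, dotProduct_mulVec, hxU]
  simp only [mulVec_diagonal, dotProduct, Function.comp_apply, RCLike.ofReal_real_eq_id, id,
    U, star_eigenvectorUnitary_mulVec_apply]
  exact sum_congr rfl fun i _ => by ring

lemma dotProduct_mulVec_nonpos_of_forall_eigenvalues_pos (x : n → ℝ)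
    (hx : ∀ i, 0 < hA.eigenvalues i → ⇑(hA.eigenvectorBasis i) ⬝ᵥ x = 0) :
    x ⬝ᵥ A *ᵥ x ≤ 0 := by
  rw [hA.dotProduct_mulVec_eq_sum]
  refine sum_nonpos fun i _ => ?_
  rcases le_or_gt (hA.eigenvalues i) 0 with hi | hi
  · exact mul_nonpos_of_nonpos_of_nonneg hi (sq_nonneg _)
  · simp [hx i hi]

lemma isNonposOnHyperplane_of_card_eigenvalues_pos_le_one
    (h : #{i | 0 < hA.eigenvalues i} ≤ 1) : A.IsNonposOnHyperplane := by
  -- the normal is the eigenvector of the positive eigenvalue, or `0` if there is none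
  refine ⟨∑ i ∈ {i | 0 < hA.eigenvalues i}, ⇑(hA.eigenvectorBasis i), fun x hx => ?_⟩
  refine hA.dotProduct_mulVec_nonpos_of_forall_eigenvalues_pos x fun i hi => ?_
  have hsingleton : ({i | 0 < hA.eigenvalues i} : Finset n) = {i} :=
    eq_singleton_iff_unique_mem.mpr ⟨by simpa using hi,
      fun j hj => card_le_one.mp h j hj i (by simpa using hi)⟩
  rwa [hsingleton, sum_singleton] at hx

lemma card_eigenvalues_pos_le_one_of_isNonposOnHyperplane (hA' : A.IsNonposOnHyperplane) :
    #{i | 0 < hA.eigenvalues i} ≤ 1 := by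
  obtain ⟨w, hw⟩ := hA'
  refine card_le_one.mpr fun i hi j hj => ?_
  by_contra hij
  simp only [mem_filter, mem_univ, true_and] at hi hj
  set u : n → ℝ := ⇑(hA.eigenvectorBasis i)
  set v : n → ℝ := ⇑(hA.eigenvectorBasis j)
  have hform (a b : ℝ) : (a • u + b • v) ⬝ᵥ A *ᵥ (a • u + b • v) =
      a ^ 2 * hA.eigenvalues i + b ^ 2 * hA.eigenvalues j := by
    simp only [u, v, mulVec_add, mulVec_smul, mulVec_eigenvectorBasis, add_dotProduct,
      dotProduct_add, smul_dotProduct, dotProduct_smul, eigenvectorBasis_dotProduct_eigenvectorBasis,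
      if_pos, if_neg hij, if_neg (Ne.symm hij), smul_eq_mul]
    ring
  by_cases hu : w ⬝ᵥ u = 0
  · have := hw ((1 : ℝ) • u + (0 : ℝ) • v) (by simp [hu])
    rw [hform] at this
    nlinarith
  · have := hw ((w ⬝ᵥ v) • u + (-(w ⬝ᵥ u)) • v) (by
      simp only [dotProduct_add, dotProduct_smul, smul_eq_mul]; ring)
    rw [hform, neg_sq] at this
    nlinarith [mul_pos (sq_pos_of_ne_zero hu) hj, mul_nonneg (sq_nonneg (w ⬝ᵥ v)) hi.le]

lemma card_eigenvalues_pos_le_one_iff :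
    #{i | 0 < hA.eigenvalues i} ≤ 1 ↔ A.IsNonposOnHyperplane :=
  ⟨hA.isNonposOnHyperplane_of_card_eigenvalues_pos_le_one,
    hA.card_eigenvalues_pos_le_one_of_isNonposOnHyperplane⟩

end IsHermitian

end Matrix

/-- if the real symmetric matrix `A` has at most one positive
eigenvalue and `R` is any real `m × n` matrix, then `R * A * Rᵀ` has at most one
positive eigenvalue. -/
theorem congruence_one_pos_eigenvalue (n m : ℕ) (A : Matrix (Fin n) (Fin n) ℝ)
    (hA : A.IsHermitian)
    (hcount : (Finset.univ.filter fun i => 0 < hA.eigenvalues i).card ≤ 1)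
    (R : Matrix (Fin m) (Fin n) ℝ)
    (hB : (R * A * Rᵀ).IsHermitian) :
    (Finset.univ.filter fun i => 0 < hB.eigenvalues i).card ≤ 1 :=
  hB.card_eigenvalues_pos_le_one_iff.mpr
    ((hA.card_eigenvalues_pos_le_one_iff.mp hcount).mul_mul_transpose R)
end

section
/- The symmetric 4×4 matrix M with rows (0,100,9,4), (100,0,4,36), (9,4,0,1), (4,36,1,0) has at least two strictly positive eigenvalues; equivalently, the squared-coefficient polynomial f₂ = 100wx + 9wy + 4wz + 4xy + 36xz obtained by squaring the coefficients of the strongly log-concave polynomial f = 10wx + 3wy + 2wz + 2xy + 6xz is not strongly log-concave. -/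
/-!
The trace of the matrix is `0` and its determinant is `36864 > 0`. If at most one eigenvalue were
positive, then either all four are `≤ 0`, so that summing to `0` they all vanish, or exactly three
are `≤ 0` and the product of all four is `≤ 0`.
-/

open Finset

section SignPattern

variable {ι R : Type*} [CommRing R] [LinearOrder R] [IsStrictOrderedRing R]

lemma Finset.prod_nonpos_of_odd_card {s : Finset ι} {f : ι → R} (hs : Odd #s)
    (hf : ∀ i ∈ s, f i ≤ 0) : ∏ i ∈ s, f i ≤ 0 := by
  have hneg : 0 ≤ ∏ i ∈ s, -f i := prod_nonneg fun i hi ↦ neg_nonneg.2 (hf i hi)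
  rwa [prod_neg, hs.neg_one_pow, neg_one_mul, neg_nonneg] at hneg

theorem two_le_card_pos_of_sum_nonneg_of_prod_pos [Fintype ι] [Nonempty ι]
    (hι : Even (Fintype.card ι)) {x : ι → R} (hsum : 0 ≤ ∑ i, x i) (hprod : 0 < ∏ i, x i) :
    2 ≤ #{i | 0 < x i} := by
  classical
  by_contra! hlt
  obtain hnone | hone : #{i | 0 < x i} = 0 ∨ #{i | 0 < x i} = 1 := by omega
  · have hnonpos : ∀ i ∈ univ, x i ≤ 0 := by
      simpa [filter_eq_empty_iff] using card_eq_zero.1 hnone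
    have hzero := (sum_eq_zero_iff_of_nonpos hnonpos).1 (le_antisymm (sum_nonpos hnonpos) hsum)
    obtain ⟨i⟩ := ‹Nonempty ι›
    exact hprod.ne' (prod_eq_zero (mem_univ i) (hzero i (mem_univ i)))
  · obtain ⟨a, ha⟩ := card_eq_one.1 hone
    have hpos : 0 < x a := by simpa using (Finset.ext_iff.1 ha a).2 (mem_singleton_self a)
    have hrest : ∀ j ∈ univ.erase a, x j ≤ 0 := fun j hj ↦ by
      have hj' : j ∉ ({a} : Finset ι) := by simpa using ne_of_mem_erase hj
      rw [← ha] at hj'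
      simpa using hj'
    have hodd : Odd #(univ.erase a) := by
      rw [card_erase_of_mem (mem_univ a), card_univ]
      exact Nat.Even.sub_odd Fintype.card_pos hι odd_one
    rw [← mul_prod_erase univ x (mem_univ a)] at hprod
    exact hprod.not_ge (mul_nonpos_of_nonneg_of_nonpos hpos.le (prod_nonpos_of_odd_card hodd hrest))

end SignPattern

/-- the Hessian of the squared-coefficient polynomial
`f₂ = 100wx + 9wy + 4wz + 4xy + 36xz` has at least two strictly positive
eigenvalues, so `f₂` is not strongly log-concave. -/
theorem counterexample_two_pos_eigenvalues
    (hM : (!![(0:ℝ), 100, 9, 4; 100, 0, 4, 36; 9, 4, 0, 1; 4, 36, 1, 0]).IsHermitian) :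
    2 ≤ (Finset.univ.filter fun i => 0 < hM.eigenvalues i).card := by
  have htrace : (!![(0:ℝ), 100, 9, 4; 100, 0, 4, 36; 9, 4, 0, 1; 4, 36, 1, 0]).trace = 0 := by
    simp [Matrix.trace, Fin.sum_univ_four]
  have hdet : (!![(0:ℝ), 100, 9, 4; 100, 0, 4, 36; 9, 4, 0, 1; 4, 36, 1, 0]).det = 36864 := by
    simp [Matrix.det_succ_row_zero, Fin.sum_univ_succ, Fin.succAbove]
    norm_num
  have hsum : 0 = ∑ i, hM.eigenvalues i := by simpa [htrace] using hM.trace_eq_sum_eigenvalues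
  have hprod : 36864 = ∏ i, hM.eigenvalues i := by simpa [hdet] using hM.det_eq_prod_eigenvalues
  refine two_le_card_pos_of_sum_nonneg_of_prod_pos (by decide) hsum.le ?_
  rw [← hprod]
  norm_num
end

section
/- A polynomial f = ∑_{|S|≤d} c_S z^S y^{d-|S|} with nonnegative coefficients, not all c_S with |S|<d zero, is indecomposable if and only if its polarization Πf is indecomposable, where a polynomial is indecomposable if it cannot be written as g₁ + g₂ with g₁, g₂ nonzero polynomials in disjoint sets of variables. -/
open MvPolynomial Finset

/-- A polynomial is decomposable if it is the sum of two polynomials in disjoint,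
nonempty sets of variables. -/
def MvPolynomial.Decomposable {σ : Type*} [DecidableEq σ] (p : MvPolynomial σ ℝ) : Prop :=
  ∃ g₁ g₂ : MvPolynomial σ ℝ, p = g₁ + g₂ ∧ g₁.vars.Nonempty ∧ g₂.vars.Nonempty ∧
    Disjoint g₁.vars g₂.vars

/-- Scaled polarization-type operator: given a coefficient family `c` on subsets of
`[n]`, a degree parameter `m` and a set `T` of `y`-variables, form
`∑_{|S| ≤ m} c S * (choose m |S|)⁻¹ * z^S * e_{m-|S|}(y_j, j ∈ T)`. -/
noncomputable def polarAux (n d : ℕ) (c : Finset (Fin n) → ℝ) (m : ℕ) (T : Finset (Fin d)) :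
    MvPolynomial (Fin n ⊕ Fin d) ℝ :=
  ∑ S ∈ Finset.univ.powerset.filter (fun S : Finset (Fin n) => S.card ≤ m),
    MvPolynomial.C (c S * ((m.choose S.card : ℝ))⁻¹) * (∏ i ∈ S, X (Sum.inl i)) *
      ∑ U ∈ T.powersetCard (m - S.card), ∏ j ∈ U, X (Sum.inr j)

/-! ### Auxiliary lemmas -/

section Aux

lemma MvPolySplit.supp_subset_vars {σ : Type*} [DecidableEq σ] {p : MvPolynomial σ ℝ}
    {m : σ →₀ ℕ} (hm : m ∈ p.support) : m.support ⊆ p.vars :=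
  fun x hx => (mem_vars x).2 ⟨m, hm, hx⟩

open MvPolySplit in
/-- Characterization of decomposability in terms of a splitting of the monomial
supports. -/
lemma MvPolynomial.decomposable_iff {σ : Type*} [DecidableEq σ] (p : MvPolynomial σ ℝ) :
    p.Decomposable ↔ ∃ A B : Finset σ, Disjoint A B ∧ (A ∩ p.vars).Nonempty ∧
      (B ∩ p.vars).Nonempty ∧ ∀ m ∈ p.support, m.support ⊆ A ∨ m.support ⊆ B := by
  classical
  constructor
  · rintro ⟨g₁, g₂, hp, h1, h2, hdis⟩
    refine ⟨g₁.vars, g₂.vars, hdis, ?_, ?_, ?_⟩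
    · obtain ⟨x, hx⟩ := h1
      obtain ⟨m, hm, hxm⟩ := (mem_vars x).1 hx
      have hg2 : coeff m g₂ = 0 := by
        by_contra h
        exact absurd hdis (Finset.not_disjoint_iff.2
          ⟨x, hx, supp_subset_vars (mem_support_iff.2 h) hxm⟩)
      have hmp : m ∈ p.support := by
        rw [mem_support_iff, hp, coeff_add, hg2, add_zero]
        exact mem_support_iff.1 hm
      exact ⟨x, Finset.mem_inter.2 ⟨hx, (mem_vars x).2 ⟨m, hmp, hxm⟩⟩⟩
    · obtain ⟨x, hx⟩ := h2
      obtain ⟨m, hm, hxm⟩ := (mem_vars x).1 hx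
      have hg1 : coeff m g₁ = 0 := by
        by_contra h
        exact absurd hdis (Finset.not_disjoint_iff.2
          ⟨x, supp_subset_vars (mem_support_iff.2 h) hxm, hx⟩)
      have hmp : m ∈ p.support := by
        rw [mem_support_iff, hp, coeff_add, hg1, zero_add]
        exact mem_support_iff.1 hm
      exact ⟨x, Finset.mem_inter.2 ⟨hx, (mem_vars x).2 ⟨m, hmp, hxm⟩⟩⟩
    · intro m hm
      rw [hp] at hm
      rcases Finset.mem_union.1 (support_add hm) with h | h
      · exact Or.inl (supp_subset_vars h)
      · exact Or.inr (supp_subset_vars h)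
  · rintro ⟨A, B, hdis, ⟨x, hxA⟩, ⟨y, hyB⟩, hmono⟩
    rw [Finset.mem_inter] at hxA hyB
    set g₁ : MvPolynomial σ ℝ :=
      ∑ m ∈ p.support.filter (fun m => m.support ⊆ A), monomial m (coeff m p) with hg₁
    set g₂ : MvPolynomial σ ℝ :=
      ∑ m ∈ p.support.filter (fun m => ¬ m.support ⊆ A), monomial m (coeff m p) with hg₂
    have hcoeff : ∀ (s : Finset (σ →₀ ℕ)) (m : σ →₀ ℕ),
        coeff m (∑ m' ∈ s, monomial m' (coeff m' p)) = if m ∈ s then coeff m p else 0 := by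
      intro s m
      rw [coeff_sum]
      simp only [coeff_monomial]
      exact Finset.sum_ite_eq' s m _
    have hsupp : ∀ (q : (σ →₀ ℕ) → Prop) [DecidablePred q],
        (∑ m ∈ p.support.filter q, monomial m (coeff m p)).support = p.support.filter q := by
      intro q _
      ext m
      rw [mem_support_iff, hcoeff]
      constructor
      · intro h
        by_contra hm
        rw [if_neg hm] at h
        exact h rfl
      · intro h
        rw [if_pos h]
        exact mem_support_iff.1 (Finset.mem_filter.1 h).1
    have hvars1 : g₁.vars ⊆ A := by
      intro z hz
      obtain ⟨m, hm, hzm⟩ := (mem_vars z).1 hz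
      rw [hg₁, hsupp] at hm
      exact (Finset.mem_filter.1 hm).2 hzm
    have hvars2 : g₂.vars ⊆ B := by
      intro z hz
      obtain ⟨m, hm, hzm⟩ := (mem_vars z).1 hz
      rw [hg₂, hsupp] at hm
      obtain ⟨hm1, hm2⟩ := Finset.mem_filter.1 hm
      rcases hmono m hm1 with h | h
      · exact absurd h hm2
      · exact h hzm
    refine ⟨g₁, g₂, ?_, ?_, ?_, Finset.disjoint_of_subset_left hvars1
      (Finset.disjoint_of_subset_right hvars2 hdis)⟩
    · rw [hg₁, hg₂, Finset.sum_filter_add_sum_filter_not, support_sum_monomial_coeff]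
    · obtain ⟨m, hm, hxm⟩ := (mem_vars x).1 hxA.2
      have hmA : m.support ⊆ A := by
        rcases hmono m hm with h | h
        · exact h
        · exact absurd hdis (Finset.not_disjoint_iff.2 ⟨x, hxA.1, h hxm⟩)
      refine ⟨x, (mem_vars x).2 ⟨m, ?_, hxm⟩⟩
      rw [hg₁, hsupp]
      exact Finset.mem_filter.2 ⟨hm, hmA⟩
    · obtain ⟨m, hm, hym⟩ := (mem_vars y).1 hyB.2
      have hmB : ¬ m.support ⊆ A := by
        intro h
        exact absurd hdis (Finset.not_disjoint_iff.2 ⟨y, h hym, hyB.1⟩)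
      refine ⟨y, (mem_vars y).2 ⟨m, ?_, hym⟩⟩
      rw [hg₂, hsupp]
      exact Finset.mem_filter.2 ⟨hm, hmB⟩

/-- The monomial `z^S y^{d-|S|}` of `f`. -/
noncomputable def mF (n d : ℕ) (S : Finset (Fin n)) : (Fin n ⊕ Unit) →₀ ℕ :=
  (∑ i ∈ S, Finsupp.single (Sum.inl i) 1) + Finsupp.single (Sum.inr ()) (d - S.card)

/-- The monomial `z^S y^U` of `Πf`. -/
noncomputable def mP (n d : ℕ) (S : Finset (Fin n)) (U : Finset (Fin d)) :
    (Fin n ⊕ Fin d) →₀ ℕ :=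
  (∑ i ∈ S, Finsupp.single (Sum.inl i) 1) + ∑ j ∈ U, Finsupp.single (Sum.inr j) 1

/-- `f` itself. -/
noncomputable def fpoly (n d : ℕ) (c : Finset (Fin n) → ℝ) : MvPolynomial (Fin n ⊕ Unit) ℝ :=
  ∑ S ∈ Finset.univ.powerset.filter (fun S : Finset (Fin n) => S.card ≤ d),
    MvPolynomial.C (c S) * (∏ i ∈ S, X (Sum.inl i)) * X (Sum.inr ()) ^ (d - S.card)

lemma mF_apply_inl (n d : ℕ) (S : Finset (Fin n)) (a : Fin n) :
    mF n d S (Sum.inl a) = if a ∈ S then 1 else 0 := by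
  simp [mF, Finsupp.finset_sum_apply, Finsupp.single_apply]

lemma mF_apply_inr (n d : ℕ) (S : Finset (Fin n)) :
    mF n d S (Sum.inr ()) = d - S.card := by
  simp [mF, Finsupp.finset_sum_apply, Finsupp.single_apply]

lemma mP_apply_inl (n d : ℕ) (S : Finset (Fin n)) (U : Finset (Fin d)) (a : Fin n) :
    mP n d S U (Sum.inl a) = if a ∈ S then 1 else 0 := by
  simp [mP, Finsupp.finset_sum_apply, Finsupp.single_apply]

lemma mP_apply_inr (n d : ℕ) (S : Finset (Fin n)) (U : Finset (Fin d)) (j : Fin d) :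
    mP n d S U (Sum.inr j) = if j ∈ U then 1 else 0 := by
  simp [mP, Finsupp.finset_sum_apply, Finsupp.single_apply]

lemma mem_mF_support (n d : ℕ) (S : Finset (Fin n)) (x : Fin n ⊕ Unit) :
    x ∈ (mF n d S).support ↔ (∃ a ∈ S, x = Sum.inl a) ∨ (x = Sum.inr () ∧ S.card < d) := by
  rw [Finsupp.mem_support_iff]
  cases x with
  | inl a =>
    rw [mF_apply_inl]
    by_cases h : a ∈ S <;> simp [h]
  | inr t =>
    cases t
    rw [mF_apply_inr]
    constructor
    · intro h; exact Or.inr ⟨rfl, by omega⟩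
    · rintro (⟨a, _, h⟩ | ⟨_, h⟩)
      · exact absurd h (by simp)
      · omega

lemma mem_mP_support (n d : ℕ) (S : Finset (Fin n)) (U : Finset (Fin d)) (x : Fin n ⊕ Fin d) :
    x ∈ (mP n d S U).support ↔ (∃ a ∈ S, x = Sum.inl a) ∨ (∃ j ∈ U, x = Sum.inr j) := by
  rw [Finsupp.mem_support_iff]
  cases x with
  | inl a =>
    rw [mP_apply_inl]
    by_cases h : a ∈ S <;> simp [h]
  | inr j =>
    rw [mP_apply_inr]
    by_cases h : j ∈ U <;> simp [h]

lemma mF_inj (n d : ℕ) {S S' : Finset (Fin n)} (h : mF n d S = mF n d S') : S = S' := by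
  ext a
  have := DFunLike.congr_fun h (Sum.inl a)
  rw [mF_apply_inl, mF_apply_inl] at this
  by_cases h1 : a ∈ S <;> by_cases h2 : a ∈ S' <;> simp [h1, h2] at this ⊢

lemma mP_inj (n d : ℕ) {S S' : Finset (Fin n)} {U U' : Finset (Fin d)}
    (h : mP n d S U = mP n d S' U') : S = S' ∧ U = U' := by
  constructor
  · ext a
    have := DFunLike.congr_fun h (Sum.inl a)
    rw [mP_apply_inl, mP_apply_inl] at this
    by_cases h1 : a ∈ S <;> by_cases h2 : a ∈ S' <;> simp [h1, h2] at this ⊢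
  · ext j
    have := DFunLike.congr_fun h (Sum.inr j)
    rw [mP_apply_inr, mP_apply_inr] at this
    by_cases h1 : j ∈ U <;> by_cases h2 : j ∈ U' <;> simp [h1, h2] at this ⊢

lemma prod_X_eq {σ α : Type*} [DecidableEq σ] (e : α → σ) (S : Finset α) :
    (∏ i ∈ S, X (e i) : MvPolynomial σ ℝ) = monomial (∑ i ∈ S, Finsupp.single (e i) 1) 1 := by
  classical
  induction S using Finset.induction with
  | empty => simp [monomial_zero']
  | @insert a s ha ih =>
    rw [Finset.prod_insert ha, Finset.sum_insert ha, ih, X, monomial_mul, one_mul]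

lemma fpoly_eq (n d : ℕ) (c : Finset (Fin n) → ℝ) :
    fpoly n d c = ∑ S ∈ Finset.univ.powerset.filter (fun S : Finset (Fin n) => S.card ≤ d),
      monomial (mF n d S) (c S) := by
  refine Finset.sum_congr rfl fun S _ => ?_
  rw [prod_X_eq, X_pow_eq_monomial, C_mul_monomial, monomial_mul, mul_one, mul_one, mF]

lemma ppoly_eq (n d : ℕ) (c : Finset (Fin n) → ℝ) :
    polarAux n d c d Finset.univ
      = ∑ S ∈ Finset.univ.powerset.filter (fun S : Finset (Fin n) => S.card ≤ d),
          ∑ U ∈ Finset.univ.powersetCard (d - S.card),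
            monomial (mP n d S U) (c S * ((d.choose S.card : ℝ))⁻¹) := by
  refine Finset.sum_congr rfl fun S _ => ?_
  rw [Finset.mul_sum]
  refine Finset.sum_congr rfl fun U _ => ?_
  rw [prod_X_eq, prod_X_eq, C_mul_monomial, monomial_mul, mul_one, mul_one, mP]

lemma coeff_fpoly (n d : ℕ) (c : Finset (Fin n) → ℝ) {S0 : Finset (Fin n)} (h : S0.card ≤ d) :
    coeff (mF n d S0) (fpoly n d c) = c S0 := by
  rw [fpoly_eq, coeff_sum]
  simp only [coeff_monomial]
  rw [Finset.sum_eq_single S0]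
  · rw [if_pos rfl]
  · intro b _ hb
    exact if_neg fun hh => hb (mF_inj n d hh)
  · intro hS0
    exact absurd (Finset.mem_filter.2 ⟨Finset.mem_powerset.2 (Finset.subset_univ _), h⟩) hS0

lemma coeff_ppoly (n d : ℕ) (c : Finset (Fin n) → ℝ) {S0 : Finset (Fin n)}
    {U0 : Finset (Fin d)} (h : S0.card ≤ d) (hU : U0.card = d - S0.card) :
    coeff (mP n d S0 U0) (polarAux n d c d Finset.univ)
      = c S0 * ((d.choose S0.card : ℝ))⁻¹ := by
  rw [ppoly_eq, coeff_sum]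
  rw [Finset.sum_eq_single S0]
  · rw [coeff_sum]
    simp only [coeff_monomial]
    rw [Finset.sum_eq_single U0]
    · rw [if_pos rfl]
    · intro b _ hb
      exact if_neg fun hh => hb (mP_inj n d hh).2
    · intro hU0
      exact absurd (Finset.mem_powersetCard.2 ⟨Finset.subset_univ _, hU⟩) hU0
  · intro b _ hb
    rw [coeff_sum]
    refine Finset.sum_eq_zero fun U _ => ?_
    rw [coeff_monomial]
    exact if_neg fun hh => hb (mP_inj n d hh).1
  · intro hS0
    exact absurd (Finset.mem_filter.2 ⟨Finset.mem_powerset.2 (Finset.subset_univ _), h⟩) hS0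

lemma mem_support_fpoly (n d : ℕ) (c : Finset (Fin n) → ℝ) {S : Finset (Fin n)}
    (h1 : S.card ≤ d) (h2 : c S ≠ 0) : mF n d S ∈ (fpoly n d c).support :=
  mem_support_iff.2 (by rw [coeff_fpoly n d c h1]; exact h2)

lemma mem_support_ppoly (n d : ℕ) (c : Finset (Fin n) → ℝ) {S : Finset (Fin n)}
    {U : Finset (Fin d)} (h1 : S.card ≤ d) (hU : U.card = d - S.card) (h2 : c S ≠ 0) :
    mP n d S U ∈ (polarAux n d c d Finset.univ).support := by
  rw [mem_support_iff, coeff_ppoly n d c h1 hU]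
  have : ((d.choose S.card : ℝ)) ≠ 0 :=
    Nat.cast_ne_zero.2 (Nat.choose_pos h1).ne'
  exact mul_ne_zero h2 (inv_ne_zero this)

lemma support_fpoly (n d : ℕ) (c : Finset (Fin n) → ℝ) {m : (Fin n ⊕ Unit) →₀ ℕ}
    (hm : m ∈ (fpoly n d c).support) :
    ∃ S, S.card ≤ d ∧ c S ≠ 0 ∧ m = mF n d S := by
  classical
  rw [fpoly_eq] at hm
  obtain ⟨S, hS, hm2⟩ := Finset.mem_biUnion.1 (MvPolynomial.support_sum hm)
  rw [support_monomial] at hm2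
  split_ifs at hm2 with h0
  · exact absurd hm2 (Finset.notMem_empty m)
  · exact ⟨S, (Finset.mem_filter.1 hS).2, h0, Finset.mem_singleton.1 hm2⟩

lemma support_ppoly (n d : ℕ) (c : Finset (Fin n) → ℝ) {m : (Fin n ⊕ Fin d) →₀ ℕ}
    (hm : m ∈ (polarAux n d c d Finset.univ).support) :
    ∃ S U, S.card ≤ d ∧ U.card = d - S.card ∧ c S ≠ 0 ∧ m = mP n d S U := by
  classical
  rw [ppoly_eq] at hm
  obtain ⟨S, hS, hm2⟩ := Finset.mem_biUnion.1 (MvPolynomial.support_sum hm)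
  obtain ⟨U, hU, hm3⟩ := Finset.mem_biUnion.1 (MvPolynomial.support_sum hm2)
  rw [support_monomial] at hm3
  split_ifs at hm3 with h0
  · exact absurd hm3 (Finset.notMem_empty m)
  · refine ⟨S, U, (Finset.mem_filter.1 hS).2, (Finset.mem_powersetCard.1 hU).2, ?_,
      Finset.mem_singleton.1 hm3⟩
    intro hc
    exact h0 (by rw [hc, zero_mul])

/-! ### vars facts -/

lemma vars_fpoly_y (n d : ℕ) (c : Finset (Fin n) → ℝ)
    (hsupp : ∃ S : Finset (Fin n), S.card < d ∧ c S ≠ 0) :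
    Sum.inr () ∈ (fpoly n d c).vars := by
  obtain ⟨S0, hlt, hne⟩ := hsupp
  refine (mem_vars _).2 ⟨mF n d S0, mem_support_fpoly n d c hlt.le hne, ?_⟩
  exact (mem_mF_support n d S0 _).2 (Or.inr ⟨rfl, hlt⟩)

lemma vars_fpoly_inl (n d : ℕ) (c : Finset (Fin n) → ℝ) (i : Fin n) :
    Sum.inl i ∈ (fpoly n d c).vars ↔ ∃ S, S.card ≤ d ∧ c S ≠ 0 ∧ i ∈ S := by
  constructor
  · intro h
    obtain ⟨m, hm, him⟩ := (mem_vars _).1 h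
    obtain ⟨S, h1, h2, rfl⟩ := support_fpoly n d c hm
    rcases (mem_mF_support n d S _).1 him with ⟨a, ha, hai⟩ | ⟨h, _⟩
    · rw [Sum.inl.injEq] at hai
      exact ⟨S, h1, h2, hai ▸ ha⟩
    · exact absurd h (by simp)
  · rintro ⟨S, h1, h2, hi⟩
    refine (mem_vars _).2 ⟨mF n d S, mem_support_fpoly n d c h1 h2, ?_⟩
    exact (mem_mF_support n d S _).2 (Or.inl ⟨i, hi, rfl⟩)

lemma vars_ppoly_inl (n d : ℕ) (c : Finset (Fin n) → ℝ) (i : Fin n) :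
    Sum.inl i ∈ (polarAux n d c d Finset.univ).vars ↔ ∃ S, S.card ≤ d ∧ c S ≠ 0 ∧ i ∈ S := by
  constructor
  · intro h
    obtain ⟨m, hm, him⟩ := (mem_vars _).1 h
    obtain ⟨S, U, h1, hU, h2, rfl⟩ := support_ppoly n d c hm
    rcases (mem_mP_support n d S U _).1 him with ⟨a, ha, hai⟩ | ⟨j, _, hj⟩
    · rw [Sum.inl.injEq] at hai
      exact ⟨S, h1, h2, hai ▸ ha⟩
    · exact absurd hj (by simp)
  · rintro ⟨S, h1, h2, hi⟩
    obtain ⟨U, _, hUcard⟩ := Finset.exists_subset_card_eq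
      (show d - S.card ≤ (Finset.univ : Finset (Fin d)).card by
        rw [Finset.card_univ, Fintype.card_fin]; omega)
    refine (mem_vars _).2 ⟨mP n d S U, mem_support_ppoly n d c h1 hUcard h2, ?_⟩
    exact (mem_mP_support n d S U _).2 (Or.inl ⟨i, hi, rfl⟩)

lemma vars_ppoly_inr (n d : ℕ) (c : Finset (Fin n) → ℝ)
    (hsupp : ∃ S : Finset (Fin n), S.card < d ∧ c S ≠ 0) (j : Fin d) :
    Sum.inr j ∈ (polarAux n d c d Finset.univ).vars := by
  obtain ⟨S0, hlt, hne⟩ := hsupp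
  obtain ⟨U, hjU, hUcard⟩ := Finset.exists_superset_card_eq
    (s := {j}) (n := d - S0.card)
    (by rw [Finset.card_singleton]; omega)
    (by rw [Fintype.card_fin]; omega)
  refine (mem_vars _).2 ⟨mP n d S0 U, mem_support_ppoly n d c hlt.le hUcard hne, ?_⟩
  exact (mem_mP_support n d S0 U _).2 (Or.inr ⟨j, hjU (Finset.mem_singleton_self j), rfl⟩)

end Aux

/-! ### The two bridge steps -/

section Steps

variable (n d : ℕ) (c : Finset (Fin n) → ℝ)

/-- If `f` splits with the `y`-variable in the part `B`, then `Πf` is decomposable. -/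
lemma fwd_step (hd : 1 ≤ d)
    (hsupp : ∃ S : Finset (Fin n), S.card < d ∧ c S ≠ 0)
    (A B : Finset (Fin n ⊕ Unit)) (hdis : Disjoint A B)
    (hA : (A ∩ (fpoly n d c).vars).Nonempty)
    (hmono : ∀ m ∈ (fpoly n d c).support, m.support ⊆ A ∨ m.support ⊆ B)
    (hyB : Sum.inr () ∈ B) :
    MvPolynomial.Decomposable (polarAux n d c d Finset.univ) := by
  classical
  rw [MvPolynomial.decomposable_iff]
  refine ⟨(Finset.univ.filter fun i : Fin n => Sum.inl i ∈ A).image Sum.inl,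
    ((Finset.univ.filter fun i : Fin n => Sum.inl i ∈ B).image Sum.inl) ∪
      Finset.univ.image Sum.inr, ?_, ?_, ?_, ?_⟩
  · rw [Finset.disjoint_left]
    intro x hx hx'
    obtain ⟨i, hi, rfl⟩ := Finset.mem_image.1 hx
    rw [Finset.mem_filter] at hi
    rcases Finset.mem_union.1 hx' with h | h
    · obtain ⟨i', hi', heq⟩ := Finset.mem_image.1 h
      rw [Finset.mem_filter] at hi'
      rw [Sum.inl.injEq] at heq
      exact absurd hdis (Finset.not_disjoint_iff.2 ⟨Sum.inl i, hi.2, heq ▸ hi'.2⟩)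
    · obtain ⟨j, _, heq⟩ := Finset.mem_image.1 h
      exact absurd heq (by simp)
  · obtain ⟨x, hx⟩ := hA
    rw [Finset.mem_inter] at hx
    obtain ⟨i, rfl⟩ : ∃ i, x = Sum.inl i := by
      cases x with
      | inl i => exact ⟨i, rfl⟩
      | inr t =>
        cases t
        exact absurd hdis (Finset.not_disjoint_iff.2 ⟨Sum.inr (), hx.1, hyB⟩)
    refine ⟨Sum.inl i, Finset.mem_inter.2 ⟨?_, ?_⟩⟩
    · exact Finset.mem_image.2 ⟨i, Finset.mem_filter.2 ⟨Finset.mem_univ i, hx.1⟩, rfl⟩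
    · exact (vars_ppoly_inl n d c i).2 ((vars_fpoly_inl n d c i).1 hx.2)
  · refine ⟨Sum.inr ⟨0, hd⟩, Finset.mem_inter.2 ⟨?_, vars_ppoly_inr n d c hsupp _⟩⟩
    exact Finset.mem_union.2 (Or.inr (Finset.mem_image.2 ⟨_, Finset.mem_univ _, rfl⟩))
  · intro m hm
    obtain ⟨S, U, h1, hU, h2, rfl⟩ := support_ppoly n d c hm
    have hmF := hmono (mF n d S) (mem_support_fpoly n d c h1 h2)
    rcases hmF with hsub | hsub
    · -- the `z^S` part is in `A`; then `S.card = d` and `U = ∅`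
      have hcard : ¬ S.card < d := by
        intro hlt
        have : Sum.inr () ∈ A := hsub ((mem_mF_support n d S _).2 (Or.inr ⟨rfl, hlt⟩))
        exact absurd hdis (Finset.not_disjoint_iff.2 ⟨_, this, hyB⟩)
      have hUe : U = ∅ := by
        rw [← Finset.card_eq_zero]
        omega
      left
      intro x hx
      rcases (mem_mP_support n d S U _).1 hx with ⟨a, ha, rfl⟩ | ⟨j, hj, rfl⟩
      · have : Sum.inl a ∈ A := hsub ((mem_mF_support n d S _).2 (Or.inl ⟨a, ha, rfl⟩))
        exact Finset.mem_image.2 ⟨a, Finset.mem_filter.2 ⟨Finset.mem_univ a, this⟩, rfl⟩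
      · rw [hUe] at hj
        exact absurd hj (Finset.notMem_empty j)
    · right
      intro x hx
      rcases (mem_mP_support n d S U _).1 hx with ⟨a, ha, rfl⟩ | ⟨j, hj, rfl⟩
      · have : Sum.inl a ∈ B := hsub ((mem_mF_support n d S _).2 (Or.inl ⟨a, ha, rfl⟩))
        exact Finset.mem_union.2 (Or.inl
          (Finset.mem_image.2 ⟨a, Finset.mem_filter.2 ⟨Finset.mem_univ a, this⟩, rfl⟩))
      · exact Finset.mem_union.2 (Or.inr (Finset.mem_image.2 ⟨j, Finset.mem_univ j, rfl⟩))

/-- In any splitting of `Πf`, all `y`-variables lie on a common side. -/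
lemma ys_same (hd : 1 ≤ d)
    (hsupp : ∃ S : Finset (Fin n), S.card < d ∧ c S ≠ 0)
    (A B : Finset (Fin n ⊕ Fin d)) (hdis : Disjoint A B)
    (hmono : ∀ m ∈ (polarAux n d c d Finset.univ).support, m.support ⊆ A ∨ m.support ⊆ B) :
    (∀ j, Sum.inr j ∈ A) ∨ (∀ j, Sum.inr j ∈ B) := by
  classical
  obtain ⟨S0, hlt, hne⟩ := hsupp
  by_cases hS0 : S0 = ∅
  · -- the single monomial `y₁ ⋯ y_d` ties all `y`'s together
    subst hS0
    have hcard : (Finset.univ : Finset (Fin d)).card = d - (∅ : Finset (Fin n)).card := by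
      rw [Finset.card_univ, Fintype.card_fin, Finset.card_empty]
      omega
    have hm := mem_support_ppoly n d c (by omega) hcard hne
    rcases hmono _ hm with hsub | hsub
    · exact Or.inl fun j => hsub ((mem_mP_support n d _ _ _).2
        (Or.inr ⟨j, Finset.mem_univ j, rfl⟩))
    · exact Or.inr fun j => hsub ((mem_mP_support n d _ _ _).2
        (Or.inr ⟨j, Finset.mem_univ j, rfl⟩))
  · obtain ⟨i0, hi0⟩ := Finset.nonempty_iff_ne_empty.2 hS0
    have key : ∀ j : Fin d, ∃ U : Finset (Fin d), j ∈ U ∧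
        mP n d S0 U ∈ (polarAux n d c d Finset.univ).support := by
      intro j
      obtain ⟨U, hjU, hUcard⟩ := Finset.exists_superset_card_eq
        (s := {j}) (n := d - S0.card)
        (by rw [Finset.card_singleton]; omega)
        (by rw [Fintype.card_fin]; omega)
      exact ⟨U, hjU (Finset.mem_singleton_self j),
        mem_support_ppoly n d c hlt.le hUcard hne⟩
    by_cases hi0A : Sum.inl i0 ∈ A
    · left
      intro j
      obtain ⟨U, hjU, hm⟩ := key j
      rcases hmono _ hm with hsub | hsub
      · exact hsub ((mem_mP_support n d _ _ _).2 (Or.inr ⟨j, hjU, rfl⟩))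
      · have : Sum.inl i0 ∈ B := hsub ((mem_mP_support n d _ _ _).2 (Or.inl ⟨i0, hi0, rfl⟩))
        exact absurd hdis (Finset.not_disjoint_iff.2 ⟨_, hi0A, this⟩)
    · right
      intro j
      obtain ⟨U, hjU, hm⟩ := key j
      rcases hmono _ hm with hsub | hsub
      · exact absurd (hsub ((mem_mP_support n d _ _ _).2 (Or.inl ⟨i0, hi0, rfl⟩))) hi0A
      · exact hsub ((mem_mP_support n d _ _ _).2 (Or.inr ⟨j, hjU, rfl⟩))

/-- If `Πf` splits with all `y`-variables in the part `B'`, then `f` is decomposable. -/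
lemma bwd_step (hd : 1 ≤ d)
    (hsupp : ∃ S : Finset (Fin n), S.card < d ∧ c S ≠ 0)
    (A' B' : Finset (Fin n ⊕ Fin d)) (hdis : Disjoint A' B')
    (hA : (A' ∩ (polarAux n d c d Finset.univ).vars).Nonempty)
    (hmono : ∀ m ∈ (polarAux n d c d Finset.univ).support, m.support ⊆ A' ∨ m.support ⊆ B')
    (hyB : ∀ j, Sum.inr j ∈ B') :
    MvPolynomial.Decomposable (fpoly n d c) := by
  classical
  rw [MvPolynomial.decomposable_iff]
  refine ⟨(Finset.univ.filter fun i : Fin n => Sum.inl i ∈ A').image Sum.inl,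
    ((Finset.univ.filter fun i : Fin n => Sum.inl i ∈ B').image Sum.inl) ∪ {Sum.inr ()},
    ?_, ?_, ?_, ?_⟩
  · rw [Finset.disjoint_left]
    intro x hx hx'
    obtain ⟨i, hi, rfl⟩ := Finset.mem_image.1 hx
    rw [Finset.mem_filter] at hi
    rcases Finset.mem_union.1 hx' with h | h
    · obtain ⟨i', hi', heq⟩ := Finset.mem_image.1 h
      rw [Finset.mem_filter] at hi'
      rw [Sum.inl.injEq] at heq
      exact absurd hdis (Finset.not_disjoint_iff.2 ⟨Sum.inl i, hi.2, heq ▸ hi'.2⟩)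
    · exact absurd (Finset.mem_singleton.1 h) (by simp)
  · obtain ⟨x, hx⟩ := hA
    rw [Finset.mem_inter] at hx
    obtain ⟨i, rfl⟩ : ∃ i, x = Sum.inl i := by
      cases x with
      | inl i => exact ⟨i, rfl⟩
      | inr j => exact absurd hdis (Finset.not_disjoint_iff.2 ⟨Sum.inr j, hx.1, hyB j⟩)
    refine ⟨Sum.inl i, Finset.mem_inter.2 ⟨?_, ?_⟩⟩
    · exact Finset.mem_image.2 ⟨i, Finset.mem_filter.2 ⟨Finset.mem_univ i, hx.1⟩, rfl⟩
    · exact (vars_fpoly_inl n d c i).2 ((vars_ppoly_inl n d c i).1 hx.2)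
  · exact ⟨Sum.inr (), Finset.mem_inter.2
      ⟨Finset.mem_union.2 (Or.inr (Finset.mem_singleton_self _)),
        vars_fpoly_y n d c hsupp⟩⟩
  · intro m hm
    obtain ⟨S, h1, h2, rfl⟩ := support_fpoly n d c hm
    by_cases hcard : S.card < d
    · -- choose a witness `U`; the `y` in it forces the `B'` side
      obtain ⟨U, _, hUcard⟩ := Finset.exists_subset_card_eq
        (s := (Finset.univ : Finset (Fin d))) (n := d - S.card)
        (by rw [Finset.card_univ, Fintype.card_fin]; omega)
      have hUne : U.Nonempty := by
        rw [← Finset.card_pos, hUcard]; omega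
      obtain ⟨j0, hj0⟩ := hUne
      have hmP := mem_support_ppoly n d c hcard.le hUcard h2
      have hsub : (mP n d S U).support ⊆ B' := by
        rcases hmono _ hmP with hsub | hsub
        · have : Sum.inr j0 ∈ A' := hsub ((mem_mP_support n d _ _ _).2 (Or.inr ⟨j0, hj0, rfl⟩))
          exact absurd hdis (Finset.not_disjoint_iff.2 ⟨_, this, hyB j0⟩)
        · exact hsub
      right
      intro x hx
      rcases (mem_mF_support n d S _).1 hx with ⟨a, ha, rfl⟩ | ⟨rfl, _⟩
      · have : Sum.inl a ∈ B' := hsub ((mem_mP_support n d _ _ _).2 (Or.inl ⟨a, ha, rfl⟩))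
        exact Finset.mem_union.2 (Or.inl
          (Finset.mem_image.2 ⟨a, Finset.mem_filter.2 ⟨Finset.mem_univ a, this⟩, rfl⟩))
      · exact Finset.mem_union.2 (Or.inr (Finset.mem_singleton_self _))
    · -- `S.card = d`: use the witness `U = ∅`
      have hScard : S.card = d := by omega
      have hUcard : (∅ : Finset (Fin d)).card = d - S.card := by
        rw [Finset.card_empty]; omega
      have hmP := mem_support_ppoly n d c h1 hUcard h2
      rcases hmono _ hmP with hsub | hsub
      · left
        intro x hx
        rcases (mem_mF_support n d S _).1 hx with ⟨a, ha, rfl⟩ | ⟨rfl, hlt⟩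
        · have : Sum.inl a ∈ A' := hsub ((mem_mP_support n d _ _ _).2 (Or.inl ⟨a, ha, rfl⟩))
          exact Finset.mem_image.2 ⟨a, Finset.mem_filter.2 ⟨Finset.mem_univ a, this⟩, rfl⟩
        · omega
      · right
        intro x hx
        rcases (mem_mF_support n d S _).1 hx with ⟨a, ha, rfl⟩ | ⟨rfl, hlt⟩
        · have : Sum.inl a ∈ B' := hsub ((mem_mP_support n d _ _ _).2 (Or.inl ⟨a, ha, rfl⟩))
          exact Finset.mem_union.2 (Or.inl
            (Finset.mem_image.2 ⟨a, Finset.mem_filter.2 ⟨Finset.mem_univ a, this⟩, rfl⟩))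
        · omega

end Steps

/-- for `f = ∑_{|S| ≤ d} c_S z^S y^{d - |S|}` with nonnegative
coefficients, not all `c_S` with `|S| < d` zero, `f` is indecomposable iff its
polarization `Πf` is indecomposable. -/
theorem indecomposable_iff_polarization_indecomposable (n d : ℕ) (hd : 1 ≤ d)
    (c : Finset (Fin n) → ℝ) (hc : ∀ S, 0 ≤ c S)
    (hsupp : ∃ S : Finset (Fin n), S.card < d ∧ c S ≠ 0) :
    (¬ MvPolynomial.Decomposable
        (∑ S ∈ Finset.univ.powerset.filter (fun S : Finset (Fin n) => S.card ≤ d),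
          MvPolynomial.C (c S) * (∏ i ∈ S, X (Sum.inl i)) *
            X (Sum.inr ()) ^ (d - S.card) : MvPolynomial (Fin n ⊕ Unit) ℝ)) ↔
      ¬ MvPolynomial.Decomposable (polarAux n d c d Finset.univ) := by
  have key : MvPolynomial.Decomposable (fpoly n d c) ↔
      MvPolynomial.Decomposable (polarAux n d c d Finset.univ) := by
    constructor
    · intro h
      rw [MvPolynomial.decomposable_iff] at h
      obtain ⟨A, B, hdis, hA, hB, hmono⟩ := h
      have hy : Sum.inr () ∈ A ∨ Sum.inr () ∈ B := by
        obtain ⟨m, hm, hym⟩ := (mem_vars _).1 (vars_fpoly_y n d c hsupp)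
        rcases hmono m hm with h | h
        · exact Or.inl (h hym)
        · exact Or.inr (h hym)
      rcases hy with hyA | hyB
      · exact fwd_step n d c hd hsupp B A hdis.symm hB
          (fun m hm => (hmono m hm).symm) hyA
      · exact fwd_step n d c hd hsupp A B hdis hA hmono hyB
    · intro h
      rw [MvPolynomial.decomposable_iff] at h
      obtain ⟨A', B', hdis, hA, hB, hmono⟩ := h
      rcases ys_same n d c hd hsupp A' B' hdis hmono with hyA | hyB
      · exact bwd_step n d c hd hsupp B' A' hdis.symm hB
          (fun m hm => (hmono m hm).symm) hyA
      · exact bwd_step n d c hd hsupp A' B' hdis hA hmono hyB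
  exact not_congr key
end

section
/- Let ρ : 2^[n] → ℝ be γ-weakly submodular with ρ(∅) = 0, let OPT ⊆ [n] with ℓ = |OPT|, and for e ∈ [n] and S ⊆ [n] write ρ(e|S) := ρ(S∪{e}) − ρ(S). Then for any S ⊆ [n] with ρ(OPT) ≤ ρ(OPT ∪ S), one has ρ(OPT) − ρ(S) ≤ ∑_{e ∈ OPT\S} ρ(e | S) + (1/2)ℓ(ℓ−1)γ. -/
open Finset

theorem aux_marginal (n : ℕ) (ρ : Finset (Fin n) → ℝ) (γ : ℝ) (hγ : 0 ≤ γ)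
    (hws : ∀ (S : Finset (Fin n)) (i j : Fin n), i ∉ S → j ∉ S → i ≠ j →
      ρ S + ρ (insert i (insert j S)) ≤ γ + ρ (insert i S) + ρ (insert j S))
    (S : Finset (Fin n)) :
    ∀ (T : Finset (Fin n)), Disjoint T S → ∀ a, a ∉ T → a ∉ S →
      ρ (insert a (S ∪ T)) - ρ (S ∪ T) ≤ ρ (insert a S) - ρ S + (T.card : ℝ) * γ := by
  intro T
  induction T using Finset.induction_on with
  | empty => intro _ a _ haS; simp
  | insert j T hjT ih =>
    intro hdisj a haT haS
    have hjS : j ∉ S := fun h => (Finset.disjoint_left.mp hdisj (Finset.mem_insert_self j T)) h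
    have hdisj' : Disjoint T S := (Finset.disjoint_insert_left.mp hdisj).2
    have haT' : a ∉ T := fun h => haT (Finset.mem_insert_of_mem h)
    have haj : a ≠ j := fun h => haT (h ▸ Finset.mem_insert_self j T)
    have hju : j ∉ S ∪ T := by simp [hjS, hjT]
    have hau : a ∉ S ∪ T := by simp [haS, haT']
    have h1 := hws (S ∪ T) a j hau hju haj
    have h2 := ih hdisj' a haT' haS
    have e1 : S ∪ insert j T = insert j (S ∪ T) := by
      ext x; simp [Finset.mem_insert, Finset.mem_union, or_comm]
    rw [e1]
    have e2 : insert a (insert j (S ∪ T)) = insert a (insert j (S ∪ T)) := rfl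
    have hc : ((insert j T).card : ℝ) = (T.card : ℝ) + 1 := by
      rw [Finset.card_insert_of_notMem hjT]; push_cast; ring
    rw [hc]
    nlinarith [h1, h2]

theorem aux_sum (n : ℕ) (ρ : Finset (Fin n) → ℝ) (γ : ℝ) (hγ : 0 ≤ γ)
    (hws : ∀ (S : Finset (Fin n)) (i j : Fin n), i ∉ S → j ∉ S → i ≠ j →
      ρ S + ρ (insert i (insert j S)) ≤ γ + ρ (insert i S) + ρ (insert j S))
    (S : Finset (Fin n)) :
    ∀ (T : Finset (Fin n)), Disjoint T S →
      ρ (S ∪ T) - ρ S ≤ (∑ e ∈ T, (ρ (insert e S) - ρ S)) +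
        (T.card : ℝ) * ((T.card : ℝ) - 1) / 2 * γ := by
  intro T
  induction T using Finset.induction_on with
  | empty => simp
  | insert a T haT ih =>
    intro hdisj
    have haS : a ∉ S := fun h => (Finset.disjoint_left.mp hdisj (Finset.mem_insert_self a T)) h
    have hdisj' : Disjoint T S := (Finset.disjoint_insert_left.mp hdisj).2
    have h1 := aux_marginal n ρ γ hγ hws S T hdisj' a haT haS
    have h2 := ih hdisj'
    have e1 : S ∪ insert a T = insert a (S ∪ T) := by
      ext x; simp [Finset.mem_insert, Finset.mem_union, or_comm]
    rw [e1, Finset.sum_insert haT]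
    have hc : ((insert a T).card : ℝ) = (T.card : ℝ) + 1 := by
      rw [Finset.card_insert_of_notMem haT]; push_cast; ring
    rw [hc]
    have hT0 : (0:ℝ) ≤ (T.card : ℝ) := Nat.cast_nonneg _
    nlinarith [h1, h2, mul_nonneg hT0 hγ]

/-- for `γ`-weakly submodular `ρ` with `ρ(∅) = 0` and `γ ≥ 0`,
assuming `ρ(OPT) ≤ ρ(OPT ∪ S)`, one has
`ρ(OPT) − ρ(S) ≤ ∑_{e ∈ OPT \ S} ρ(e | S) + (1/2)ℓ(ℓ−1)γ` with `ℓ = |OPT|`. -/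
theorem opt_gap_telescoping_bound (n : ℕ) (ρ : Finset (Fin n) → ℝ) (γ : ℝ) (hγ : 0 ≤ γ)
    (hρempty : ρ ∅ = 0)
    (hws : ∀ (S : Finset (Fin n)) (i j : Fin n), i ∉ S → j ∉ S → i ≠ j →
      ρ S + ρ (insert i (insert j S)) ≤ γ + ρ (insert i S) + ρ (insert j S))
    (OPT S : Finset (Fin n)) (hmono : ρ OPT ≤ ρ (OPT ∪ S)) :
    ρ OPT - ρ S ≤
      (∑ e ∈ OPT \ S, (ρ (insert e S) - ρ S)) +
        (1 / 2) * (OPT.card : ℝ) * ((OPT.card : ℝ) - 1) * γ := by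
  have hdisj : Disjoint (OPT \ S) S := Finset.sdiff_disjoint
  have h := aux_sum n ρ γ hγ hws S (OPT \ S) hdisj
  have e1 : S ∪ (OPT \ S) = OPT ∪ S := by
    ext x; simp [Finset.mem_union, Finset.mem_sdiff]; tauto
  rw [e1] at h
  have hcard : ((OPT \ S).card : ℝ) ≤ (OPT.card : ℝ) := by
    exact_mod_cast Finset.card_le_card (Finset.sdiff_subset)
  have hk0 : (0:ℝ) ≤ ((OPT \ S).card : ℝ) := Nat.cast_nonneg _
  have hmonot : ((OPT \ S).card : ℝ) * (((OPT \ S).card : ℝ) - 1) / 2 * γ ≤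
      (1 / 2) * (OPT.card : ℝ) * ((OPT.card : ℝ) - 1) * γ := by
    apply mul_le_mul_of_nonneg_right _ hγ
    rcases Nat.eq_zero_or_pos (OPT \ S).card with h0 | h1
    · rw [h0]
      have hl : (OPT.card : ℝ) = 0 ∨ (1:ℝ) ≤ (OPT.card : ℝ) := by
        rcases Nat.eq_zero_or_pos OPT.card with h | h
        · left; exact_mod_cast h
        · right; exact_mod_cast h
      rcases hl with h | h <;> nlinarith
    · have hk1 : (1:ℝ) ≤ ((OPT \ S).card : ℝ) := by exact_mod_cast h1
      nlinarith [mul_nonneg (sub_nonneg.mpr hcard)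
        (by linarith : (0:ℝ) ≤ (OPT.card : ℝ) + ((OPT \ S).card : ℝ) - 1)]
  linarith
end

section
/- Let ν : 2^[n] → ℝ₊ be increasing and γ-weakly submodular with γ ≥ 0, and let S₀ = ∅, S_{i+1} = S_i ∪ {argmax_e ν(S_i ∪ {e})} be the greedy sequence. Then for any k ≤ n and ℓ ≤ k, ν(S_ℓ) ≥ (1 − e^{−ℓ/k})·ν(OPT) − (1/2)k(k−1)(1 − (1 − 1/k)^ℓ)·γ, where OPT maximizes ν over subsets of size at most k. In particular ν(S_k) ≥ (1 − 1/e)ν(OPT) − (1/2)k(k−1)(1 − (1−1/k)^k)γ. -/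
open Finset

lemma weak_submod_marginal {n : ℕ} (ν : Finset (Fin n) → ℝ) (γ : ℝ)
    (hws : ∀ (S : Finset (Fin n)) (i j : Fin n), i ∉ S → j ∉ S → i ≠ j →
      ν S + ν (insert i (insert j S)) ≤ γ + ν (insert i S) + ν (insert j S)) :
    ∀ (D S : Finset (Fin n)) (e : Fin n), Disjoint D S → e ∉ S → e ∉ D →
      ν (insert e (S ∪ D)) - ν (S ∪ D) ≤ ν (insert e S) - ν S + (D.card : ℝ) * γ := by
  intro D
  induction D using Finset.induction_on with
  | empty => intro S e _ _ _; simp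
  | @insert j D hjD ih =>
    intro S e hdisj heS heD
    have hjS : j ∉ S := Finset.disjoint_left.mp hdisj (Finset.mem_insert_self j D)
    have hdisj' : Disjoint D S := (Finset.disjoint_insert_left.mp hdisj).2
    have heD' : e ∉ D := fun h => heD (Finset.mem_insert_of_mem h)
    have hej : e ≠ j := fun h => heD (h ▸ Finset.mem_insert_self j D)
    have hjSD : j ∉ S ∪ D := by simp [hjS, hjD]
    have heSD : e ∉ S ∪ D := by simp [heS, heD']
    have h1 := hws (S ∪ D) e j heSD hjSD hej
    have h2 := ih S e hdisj' heS heD'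
    rw [Finset.union_insert, Finset.card_insert_of_notMem hjD]
    push_cast
    linarith

lemma weak_submod_union {n : ℕ} (ν : Finset (Fin n) → ℝ) (γ : ℝ)
    (hws : ∀ (S : Finset (Fin n)) (i j : Fin n), i ∉ S → j ∉ S → i ≠ j →
      ν S + ν (insert i (insert j S)) ≤ γ + ν (insert i S) + ν (insert j S)) :
    ∀ (D S : Finset (Fin n)), Disjoint D S →
      ν (S ∪ D) ≤ ν S + (∑ a ∈ D, (ν (insert a S) - ν S)) +
        (D.card : ℝ) * ((D.card : ℝ) - 1) / 2 * γ := by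
  intro D
  induction D using Finset.induction_on with
  | empty => intro S _; simp
  | @insert a D haD ih =>
    intro S hdisj
    have haS : a ∉ S := Finset.disjoint_left.mp hdisj (Finset.mem_insert_self a D)
    have hdisj' : Disjoint D S := (Finset.disjoint_insert_left.mp hdisj).2
    have hA := weak_submod_marginal ν γ hws D S a hdisj' haS haD
    have hIH := ih S hdisj'
    rw [Finset.union_insert, Finset.sum_insert haD, Finset.card_insert_of_notMem haD]
    push_cast
    nlinarith [hA, hIH]

/-- greedy guarantee for increasing `γ`-weakly submodular `ν`:
the greedy sequence satisfies
`ν(S_ℓ) ≥ (1 − e^{−ℓ/k})·ν(OPT) − (1/2)k(k−1)(1 − (1 − 1/k)^ℓ)·γ` for `ℓ ≤ k`. -/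
theorem greedy_weak_submodular_guarantee (n k : ℕ) (hk1 : 1 ≤ k) (hkn : k ≤ n)
    (ν : Finset (Fin n) → ℝ) (hν0 : ∀ S, 0 ≤ ν S)
    (hmono : ∀ S T : Finset (Fin n), S ⊆ T → ν S ≤ ν T)
    (γ : ℝ) (hγ : 0 ≤ γ)
    (hws : ∀ (S : Finset (Fin n)) (i j : Fin n), i ∉ S → j ∉ S → i ≠ j →
      ν S + ν (insert i (insert j S)) ≤ γ + ν (insert i S) + ν (insert j S))
    (S : ℕ → Finset (Fin n)) (hS0 : S 0 = ∅)
    (hgreedy : ∀ i : ℕ, ∃ e : Fin n, S (i + 1) = insert e (S i) ∧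
      ∀ e' : Fin n, ν (insert e' (S i)) ≤ ν (S (i + 1)))
    (OPT : Finset (Fin n)) (hOPTcard : OPT.card ≤ k)
    (hOPT : ∀ T : Finset (Fin n), T.card ≤ k → ν T ≤ ν OPT)
    (ℓ : ℕ) (hℓ : ℓ ≤ k) :
    (1 - Real.exp (-(ℓ : ℝ) / k)) * ν OPT -
        (1 / 2) * (k : ℝ) * ((k : ℝ) - 1) * (1 - (1 - 1 / (k : ℝ)) ^ ℓ) * γ ≤
      ν (S ℓ) := by
  have hkR : (1:ℝ) ≤ (k:ℝ) := by exact_mod_cast hk1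
  have hkpos : (0:ℝ) < (k:ℝ) := by linarith
  have hk0 : (k:ℝ) ≠ 0 := ne_of_gt hkpos
  have hr0 : (0:ℝ) ≤ 1 - 1/(k:ℝ) := by
    have : 1/(k:ℝ) ≤ 1 := by
      rw [div_le_one hkpos]; exact hkR
    linarith
  -- key recursion
  have key : ∀ i : ℕ, ν OPT - ν (S (i+1)) ≤
      (1 - 1/(k:ℝ)) * (ν OPT - ν (S i)) + ((k:ℝ)-1)/2 * γ := by
    intro i
    obtain ⟨e, hSe, hmax⟩ := hgreedy i
    set D : Finset (Fin n) := OPT \ S i with hD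
    have hdisj : Disjoint D (S i) := Finset.sdiff_disjoint
    have hB := weak_submod_union ν γ hws D (S i) hdisj
    have hunion : S i ∪ D = S i ∪ OPT := Finset.union_sdiff_self_eq_union
    have hOPTsub : ν OPT ≤ ν (S i ∪ D) := by
      rw [hunion]; exact hmono _ _ Finset.subset_union_right
    have hΔ0 : ν (S i) ≤ ν (S (i+1)) := by
      rw [hSe]; exact hmono _ _ (Finset.subset_insert _ _)
    have hsum : (∑ a ∈ D, (ν (insert a (S i)) - ν (S i))) ≤
        (D.card : ℝ) * (ν (S (i+1)) - ν (S i)) := by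
      have h1 : (∑ a ∈ D, (ν (insert a (S i)) - ν (S i))) ≤
          ∑ _a ∈ D, (ν (S (i+1)) - ν (S i)) :=
        Finset.sum_le_sum (fun a _ => by have := hmax a; linarith)
      rw [Finset.sum_const, nsmul_eq_mul] at h1
      exact h1
    have hmk : (D.card : ℝ) ≤ (k:ℝ) := by
      have h1 : D.card ≤ OPT.card := Finset.card_le_card Finset.sdiff_subset
      exact_mod_cast le_trans h1 hOPTcard
    have hm0 : (0:ℝ) ≤ (D.card : ℝ) := Nat.cast_nonneg _
    have hchoose : (D.card : ℝ) * ((D.card : ℝ) - 1) ≤ (k:ℝ) * ((k:ℝ) - 1) := by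
      nlinarith [mul_nonneg (sub_nonneg.mpr hmk) (by linarith : (0:ℝ) ≤ (k:ℝ) + (D.card:ℝ) - 1)]
    have hmain : ν OPT - ν (S i) ≤ (k:ℝ) * (ν (S (i+1)) - ν (S i)) +
        (k:ℝ) * ((k:ℝ) - 1) / 2 * γ := by
      nlinarith [mul_le_mul_of_nonneg_right hmk (sub_nonneg.mpr hΔ0),
        mul_le_mul_of_nonneg_right hchoose hγ]
    have h2 : (ν OPT - ν (S i)) / (k:ℝ) ≤
        (ν (S (i+1)) - ν (S i)) + ((k:ℝ)-1)/2 * γ := by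
      rw [div_le_iff₀ hkpos]
      nlinarith [hmain]
    have h3 : (1 - 1/(k:ℝ)) * (ν OPT - ν (S i)) =
        (ν OPT - ν (S i)) - (ν OPT - ν (S i)) / (k:ℝ) := by ring
    linarith
  -- iterate
  have iter : ∀ m : ℕ, ν OPT - ν (S m) ≤
      (1 - 1/(k:ℝ))^m * (ν OPT - ν (S 0)) +
        (1/2) * (k:ℝ) * ((k:ℝ)-1) * (1 - (1 - 1/(k:ℝ))^m) * γ := by
    intro m
    induction m with
    | zero => simp
    | succ m ih =>
      have h1 := key m
      have h2 := mul_le_mul_of_nonneg_left ih hr0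
      have hid : (1 - 1/(k:ℝ)) * ((1 - 1/(k:ℝ))^m * (ν OPT - ν (S 0)) +
            (1/2) * (k:ℝ) * ((k:ℝ)-1) * (1 - (1 - 1/(k:ℝ))^m) * γ) + ((k:ℝ)-1)/2 * γ
          = (1 - 1/(k:ℝ))^(m+1) * (ν OPT - ν (S 0)) +
            (1/2) * (k:ℝ) * ((k:ℝ)-1) * (1 - (1 - 1/(k:ℝ))^(m+1)) * γ := by
        rw [pow_succ]
        field_simp
        ring
      linarith [hid ▸ (by linarith : ν OPT - ν (S (m+1)) ≤
        (1 - 1/(k:ℝ)) * ((1 - 1/(k:ℝ))^m * (ν OPT - ν (S 0)) +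
          (1/2) * (k:ℝ) * ((k:ℝ)-1) * (1 - (1 - 1/(k:ℝ))^m) * γ) + ((k:ℝ)-1)/2 * γ)]
  have hδ0nn : 0 ≤ ν OPT - ν (S 0) := by
    rw [hS0]
    have := hOPT ∅ (by simp)
    linarith
  have hδ0le : ν OPT - ν (S 0) ≤ ν OPT := by
    have := hν0 (S 0); linarith
  have hrexp : (1 - 1/(k:ℝ))^ℓ ≤ Real.exp (-(ℓ:ℝ)/k) := by
    have h1 : (1 - 1/(k:ℝ)) ≤ Real.exp (-(1/(k:ℝ))) := by
      nlinarith [Real.add_one_le_exp (-(1/(k:ℝ)))]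
    calc (1 - 1/(k:ℝ))^ℓ ≤ (Real.exp (-(1/(k:ℝ))))^ℓ := pow_le_pow_left₀ hr0 h1 ℓ
      _ = Real.exp (-(ℓ:ℝ)/k) := by
          rw [← Real.exp_nat_mul]
          congr 1
          ring
  have hfin : (1 - 1/(k:ℝ))^ℓ * (ν OPT - ν (S 0)) ≤ Real.exp (-(ℓ:ℝ)/k) * ν OPT := by
    calc (1 - 1/(k:ℝ))^ℓ * (ν OPT - ν (S 0)) ≤ (1 - 1/(k:ℝ))^ℓ * ν OPT :=
          mul_le_mul_of_nonneg_left hδ0le (pow_nonneg hr0 ℓ)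
      _ ≤ Real.exp (-(ℓ:ℝ)/k) * ν OPT :=
          mul_le_mul_of_nonneg_right hrexp (hν0 OPT)
  have := iter ℓ
  linarith
end
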